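/- arXiv:2209.09140 — 2 statements merged into one kernel-verified Lean document; each statement's English description precedes it below -/
import Mathlib

section
/- Let E be a Banach space (over ℝ or ℂ) and T : E → E a continuous linear operator. The following are equivalent: (i) T is Li-Yorke chaotic, i.e., there exists an uncountable set S ⊆ E such that every pair of distinct points x, y ∈ S satisfies liminf_{n→∞} ‖T^n x − T^n y‖ = 0 and limsup_{n→∞} ‖T^n x − T^n y‖ > 0; (ii) T has a semi-irregular vector, i.e., there exists x ∈ E with liminf_{n→∞} ‖T^n x‖ = 0 and limsup_{n→∞} ‖T^n x‖ > 0; (iii) T has an irregular vector, i.e., there exists x ∈ E with liminf_{n→∞} ‖T^n x‖ = 0 and limsup_{n→∞} ‖T^n x‖ = ∞. -/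
open Filter Topology
open scoped ENNReal NNReal

section aux
variable {E : Type*} [NormedAddCommGroup E]

private lemma liminf_zero_iff' (f : ℕ → E) :
    atTop.liminf (fun n => (‖f n‖₊ : ℝ≥0∞)) = 0 ↔
      ∀ ε : ℝ, 0 < ε → ∃ᶠ n in atTop, ‖f n‖ < ε := by
  constructor
  · intro h ε hε
    have h0 : (0:ℝ≥0∞) < ENNReal.ofReal ε := ENNReal.ofReal_pos.2 hε
    have hlt : atTop.liminf (fun n => (‖f n‖₊ : ℝ≥0∞)) < ENNReal.ofReal ε := h ▸ h0
    have := Filter.frequently_lt_of_liminf_lt (by isBoundedDefault) hlt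
    exact this.mono fun n hn => by
      rw [← enorm_eq_nnnorm, ← ofReal_norm] at hn
      exact (ENNReal.ofReal_lt_ofReal_iff hε).1 hn
  · intro h
    by_contra hne
    have hpos : 0 < atTop.liminf (fun n => (‖f n‖₊ : ℝ≥0∞)) := pos_iff_ne_zero.2 hne
    obtain ⟨r, -, hr0, hrlt⟩ := ENNReal.lt_iff_exists_real_btwn.1 hpos
    have hr : 0 < r := ENNReal.ofReal_pos.1 hr0
    have hle : atTop.liminf (fun n => (‖f n‖₊ : ℝ≥0∞)) ≤ ENNReal.ofReal r :=
      Filter.liminf_le_of_frequently_le ((h r hr).mono fun n hn => by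
        rw [← enorm_eq_nnnorm, ← ofReal_norm]
        exact ENNReal.ofReal_le_ofReal hn.le)
    exact absurd (hrlt.trans_le hle) (lt_irrefl _)

private lemma limsup_pos_iff' (f : ℕ → E) :
    0 < atTop.limsup (fun n => (‖f n‖₊ : ℝ≥0∞)) ↔
      ∃ ε : ℝ, 0 < ε ∧ ∃ᶠ n in atTop, ε ≤ ‖f n‖ := by
  constructor
  · intro h
    obtain ⟨r, -, hr0, hrlt⟩ := ENNReal.lt_iff_exists_real_btwn.1 h
    have hr : 0 < r := ENNReal.ofReal_pos.1 hr0
    refine ⟨r, hr, ?_⟩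
    have := Filter.frequently_lt_of_lt_limsup (by isBoundedDefault) hrlt
    exact this.mono fun n hn => by
      rw [← enorm_eq_nnnorm, ← ofReal_norm] at hn
      exact le_of_lt ((ENNReal.ofReal_lt_ofReal_iff_of_nonneg hr.le).1 hn)
  · rintro ⟨ε, hε, hfreq⟩
    have hle : ENNReal.ofReal ε ≤ atTop.limsup (fun n => (‖f n‖₊ : ℝ≥0∞)) :=
      Filter.le_limsup_of_frequently_le (hfreq.mono fun n hn => by
        rw [← enorm_eq_nnnorm, ← ofReal_norm]
        exact ENNReal.ofReal_le_ofReal hn)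
    exact lt_of_lt_of_le (ENNReal.ofReal_pos.2 hε) hle

private lemma limsup_top_iff' (f : ℕ → E) :
    atTop.limsup (fun n => (‖f n‖₊ : ℝ≥0∞)) = ⊤ ↔
      ∀ K : ℝ, ∃ᶠ n in atTop, K < ‖f n‖ := by
  constructor
  · intro h K
    have hlt : ENNReal.ofReal K < atTop.limsup (fun n => (‖f n‖₊ : ℝ≥0∞)) := by
      rw [h]; exact ENNReal.ofReal_lt_top
    have := Filter.frequently_lt_of_lt_limsup (by isBoundedDefault) hlt
    refine this.mono fun n hn => ?_
    rw [← enorm_eq_nnnorm, ← ofReal_norm] at hn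
    by_contra hK
    exact absurd (ENNReal.ofReal_le_ofReal (not_lt.1 hK)) (not_le.2 hn)
  · intro h
    refine ENNReal.eq_top_of_forall_nnreal_le fun r => ?_
    refine Filter.le_limsup_of_frequently_le (((h r).mono fun n hn => ?_))
    rw [← enorm_eq_nnnorm, ← ofReal_norm]
    calc (r:ℝ≥0∞) = ENNReal.ofReal r := ENNReal.ofReal_coe_nnreal.symm
      _ ≤ _ := ENNReal.ofReal_le_ofReal hn.le
end aux


set_option maxHeartbeats 1000000 in
set_option synthInstance.maxHeartbeats 400000 in
private lemma semi_to_irregular {𝕜 E : Type*} [RCLike 𝕜] [NormedAddCommGroup E]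
    [NormedSpace 𝕜 E] [CompleteSpace E] (T : E →L[𝕜] E) (x : E)
    (hlim : ∀ ε : ℝ, 0 < ε → ∃ᶠ n in atTop, ‖(T ^ n) x‖ < ε)
    (b : ℝ) (hb : 0 < b) (hfb : ∃ᶠ n in atTop, b ≤ ‖(T ^ n) x‖) :
    ∃ y : E, (∀ ε : ℝ, 0 < ε → ∃ᶠ n in atTop, ‖(T ^ n) y‖ < ε) ∧
      (∀ K : ℝ, ∃ᶠ n in atTop, K < ‖(T ^ n) y‖) := by
  -- orbit points are never zero
  have hx0 : ∀ p : ℕ, (T ^ p) x ≠ 0 := by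
    intro p hp
    have hev : ∀ᶠ n in atTop, ‖(T ^ n) x‖ = 0 := by
      rw [eventually_atTop]
      refine ⟨p, fun n hn => ?_⟩
      have e : n = (n - p) + p := by omega
      rw [e, pow_add, ContinuousLinearMap.mul_apply, hp, map_zero, norm_zero]
    obtain ⟨n, hn1, hn2⟩ := (hfb.and_eventually hev).exists
    rw [hn2] at hn1; linarith
  -- Claim A : ratios of orbit norms blow up with arbitrarily large time gap
  have claimA : ∀ C : ℝ, ∀ N : ℕ, ∃ p q : ℕ, N ≤ q ∧ C * ‖(T ^ p) x‖ < ‖(T ^ (q + p)) x‖ := by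
    intro C N
    set C' : ℝ := max C 0 with hC'
    have hC'0 : 0 ≤ C' := le_max_right _ _
    set D : ℝ := ∑ j ∈ Finset.range (N + 1), ‖(T ^ j : E →L[𝕜] E)‖ with hD
    have hD0 : 0 ≤ D := Finset.sum_nonneg fun j _ => norm_nonneg _
    have hDle : ∀ q : ℕ, q ≤ N → ‖(T ^ q : E →L[𝕜] E)‖ ≤ D := by
      intro q hq
      exact Finset.single_le_sum (f := fun j => ‖(T ^ j : E →L[𝕜] E)‖)
        (fun j _ => norm_nonneg _) (Finset.mem_range.2 (by omega))
    set ε : ℝ := b / (C' + D + 1) with hε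
    have hεpos : 0 < ε := div_pos hb (by linarith)
    obtain ⟨p, hp, -⟩ := ((hlim ε hεpos).and_eventually (eventually_ge_atTop 0)).exists
    obtain ⟨m, hm1, hm2⟩ := (hfb.and_eventually (eventually_ge_atTop (p + 1))).exists
    set q : ℕ := m - p with hqdef
    have hm : m = q + p := by omega
    have hnp : 0 < ‖(T ^ p) x‖ := norm_pos_iff.2 (hx0 p)
    have key : C' * ε < b := by
      rw [hε, ← mul_div_assoc, div_lt_iff₀ (by linarith : (0:ℝ) < C' + D + 1)]
      nlinarith
    have hqN : N ≤ q := by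
      by_contra hcon
      push_neg at hcon
      have hqle : q ≤ N := by omega
      have : ‖(T ^ m) x‖ ≤ ‖(T ^ q : E →L[𝕜] E)‖ * ‖(T ^ p) x‖ := by
        rw [hm, pow_add, ContinuousLinearMap.mul_apply]
        exact (T ^ q).le_opNorm _
      have h1 : ‖(T ^ q : E →L[𝕜] E)‖ * ‖(T ^ p) x‖ ≤ D * ε := by
        apply mul_le_mul (hDle q hqle) hp.le hnp.le hD0
      have hDε : D * ε < b := by
        rw [hε, ← mul_div_assoc, div_lt_iff₀ (by linarith : (0:ℝ) < C' + D + 1)]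
        nlinarith
      linarith
    refine ⟨p, q, hqN, ?_⟩
    have hCb : C * ‖(T ^ p) x‖ < b := by
      have : C * ‖(T ^ p) x‖ ≤ C' * ‖(T ^ p) x‖ :=
        mul_le_mul_of_nonneg_right (le_max_left _ _) hnp.le
      have h2 : C' * ‖(T ^ p) x‖ ≤ C' * ε := mul_le_mul_of_nonneg_left hp.le hC'0
      linarith
    rw [← hm]; linarith
  -- the subspace Y : closure of the span of the orbit
  set p₀ : Submodule 𝕜 E := Submodule.span 𝕜 (Set.range fun n : ℕ => (T ^ n) x) with hp₀
  set Y : Submodule 𝕜 E := p₀.topologicalClosure with hY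
  have horb : ∀ n : ℕ, (T ^ n) x ∈ Y :=
    fun n => Submodule.le_topologicalClosure p₀ (Submodule.subset_span ⟨n, rfl⟩)
  -- bound for elements of the span
  have span_bound : ∀ w ∈ p₀, ∃ C : ℝ, 0 ≤ C ∧ ∀ n : ℕ, ‖(T ^ n) w‖ ≤ C * ‖(T ^ n) x‖ := by
    intro w hw
    induction hw using Submodule.span_induction with
    | mem w hw =>
      obtain ⟨j, rfl⟩ := hw
      refine ⟨‖(T ^ j : E →L[𝕜] E)‖, norm_nonneg _, fun n => ?_⟩
      have e : (T ^ n) ((T ^ j) x) = (T ^ j) ((T ^ n) x) := by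
        rw [← ContinuousLinearMap.mul_apply, ← ContinuousLinearMap.mul_apply, ← pow_add,
          ← pow_add, add_comm]
      rw [e]
      exact (T ^ j).le_opNorm _
    | zero => exact ⟨0, le_refl 0, fun n => by simp⟩
    | add w1 w2 h1 h2 ih1 ih2 =>
      obtain ⟨C1, hC1, hb1⟩ := ih1
      obtain ⟨C2, hC2, hb2⟩ := ih2
      refine ⟨C1 + C2, by linarith, fun n => ?_⟩
      rw [map_add, add_mul]
      exact (norm_add_le _ _).trans (add_le_add (hb1 n) (hb2 n))
    | smul c w h ih =>
      obtain ⟨C, hC, hbd⟩ := ih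
      refine ⟨‖c‖ * C, by positivity, fun n => ?_⟩
      rw [map_smul, norm_smul, mul_assoc]
      exact mul_le_mul_of_nonneg_left (hbd n) (norm_nonneg _)
  -- the dense open sets
  have hcont : ∀ n : ℕ, Continuous fun y : Y => ‖(T ^ n) (y : E)‖ := fun n =>
    ((T ^ n).continuous.comp continuous_subtype_val).norm
  set U : ℕ → Set Y := fun M => {y : Y | ∃ n, M ≤ n ∧ (M : ℝ) < ‖(T ^ n) (y : E)‖} with hU
  set B : ℕ → Set Y := fun M => {y : Y | ∃ n, M ≤ n ∧ ‖(T ^ n) (y : E)‖ < 1 / (M + 1)} with hB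
  have hopenU : ∀ M, IsOpen (U M) := by
    intro M
    have e : U M = ⋃ n, ⋃ _ : M ≤ n, {y : Y | (M : ℝ) < ‖(T ^ n) (y : E)‖} := by
      ext y; simp [hU]
    rw [e]
    exact isOpen_iUnion fun n => isOpen_iUnion fun _ =>
      isOpen_lt continuous_const (hcont n)
  have hopenB : ∀ M, IsOpen (B M) := by
    intro M
    have e : B M = ⋃ n, ⋃ _ : M ≤ n, {y : Y | ‖(T ^ n) (y : E)‖ < 1 / (M + 1)} := by
      ext y; simp [hB]
    rw [e]
    exact isOpen_iUnion fun n => isOpen_iUnion fun _ =>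
      isOpen_lt (hcont n) continuous_const
  have hdenseU : ∀ M, Dense (U M) := by
    intro M
    rw [Metric.dense_iff]
    rintro y₀ r hr
    obtain ⟨p, q, hqM, hlt⟩ := claimA (2 * (M + 1) / r) M
    have hnp : 0 < ‖(T ^ p) x‖ := norm_pos_iff.2 (hx0 p)
    set c : ℝ := r / (2 * ‖(T ^ p) x‖) with hc
    have hcpos : 0 < c := by positivity
    set z : E := (c : 𝕜) • (T ^ p) x with hz
    have hzY : z ∈ Y := Y.smul_mem _ (horb p)
    have hznorm : ‖z‖ = r / 2 := by
      rw [hz, norm_smul, RCLike.norm_ofReal, abs_of_pos hcpos, hc]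
      field_simp
    have hTqz : ‖(T ^ q) z‖ = c * ‖(T ^ (q + p)) x‖ := by
      rw [hz, map_smul, norm_smul, RCLike.norm_ofReal, abs_of_pos hcpos,
        ← ContinuousLinearMap.mul_apply, ← pow_add]
    have hMlt : (M : ℝ) < ‖(T ^ q) z‖ := by
      rw [hTqz]
      have : c * (2 * (M + 1) / r * ‖(T ^ p) x‖) < c * ‖(T ^ (q + p)) x‖ :=
        mul_lt_mul_of_pos_left hlt hcpos
      have e : c * (2 * (M + 1) / r * ‖(T ^ p) x‖) = M + 1 := by
        rw [hc]; field_simp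
      rw [e] at this
      linarith
    -- two point trick
    have hmax : ‖(T ^ q) z‖ ≤ max ‖(T ^ q) ((y₀ : E) + z)‖ ‖(T ^ q) ((y₀ : E) - z)‖ := by
      have e2 : (T ^ q) ((y₀ : E) + z) - (T ^ q) ((y₀ : E) - z) = (T ^ q) z + (T ^ q) z := by
        rw [← map_sub]
        have e3 : ((y₀ : E) + z) - ((y₀ : E) - z) = z + z := by abel
        rw [e3, map_add]
      have h1 : ‖(T ^ q) z + (T ^ q) z‖ = 2 * ‖(T ^ q) z‖ := by
        rw [← two_smul 𝕜]
        rw [norm_smul]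
        norm_num
      have h2 : ‖(T ^ q) ((y₀ : E) + z) - (T ^ q) ((y₀ : E) - z)‖ ≤
          ‖(T ^ q) ((y₀ : E) + z)‖ + ‖(T ^ q) ((y₀ : E) - z)‖ := norm_sub_le _ _
      rw [e2, h1] at h2
      rcases le_total ‖(T ^ q) ((y₀ : E) + z)‖ ‖(T ^ q) ((y₀ : E) - z)‖ with h | h
      · rw [max_eq_right h]; linarith
      · rw [max_eq_left h]; linarith
    set z' : Y := ⟨z, hzY⟩ with hz'
    have hdist : ∀ s : Y, (s : E) = (y₀ : E) + z ∨ (s : E) = (y₀ : E) - z → s ∈ Metric.ball y₀ r := by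
      rintro s (hs | hs) <;>
      · rw [Metric.mem_ball, Subtype.dist_eq, hs, dist_eq_norm]
        simp only [add_sub_cancel_left, sub_sub_cancel_left, norm_neg]
        rw [hznorm]; linarith
    rcases lt_max_iff.1 (lt_of_lt_of_le hMlt hmax) with h | h
    · exact ⟨y₀ + z', hdist _ (Or.inl rfl), q, hqM, by
        simpa using h⟩
    · exact ⟨y₀ - z', hdist _ (Or.inr rfl), q, hqM, by
        simpa using h⟩
  have hdenseB : ∀ M, Dense (B M) := by
    intro M
    rw [Metric.dense_iff]
    rintro y₀ r hr
    have hy₀ : (y₀ : E) ∈ closure (p₀ : Set E) := by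
      rw [← Submodule.topologicalClosure_coe]; exact y₀.2
    obtain ⟨w, hwp, hwd⟩ := Metric.mem_closure_iff.1 hy₀ r hr
    obtain ⟨C, hC0, hC⟩ := span_bound w hwp
    have hδ : 0 < (1 / ((M : ℝ) + 1)) / (C + 1) := by positivity
    obtain ⟨n, hn2, hnM⟩ := ((hlim _ hδ).and_eventually (eventually_ge_atTop M)).exists
    refine ⟨⟨w, Submodule.le_topologicalClosure p₀ hwp⟩, ?_, n, hnM, ?_⟩
    · rw [Metric.mem_ball, Subtype.dist_eq, dist_comm]
      exact hwd
    · have h1 : ‖(T ^ n) w‖ ≤ C * ‖(T ^ n) x‖ := hC n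
      have h2 : C * ‖(T ^ n) x‖ ≤ C * ((1 / ((M : ℝ) + 1)) / (C + 1)) :=
        mul_le_mul_of_nonneg_left hn2.le hC0
      have h3 : C * ((1 / ((M : ℝ) + 1)) / (C + 1)) < 1 / ((M : ℝ) + 1) := by
        rw [div_eq_inv_mul, ← mul_assoc, mul_comm, ← mul_assoc]
        have hM1 : (0:ℝ) < 1 / ((M : ℝ) + 1) := by positivity
        have : (C + 1)⁻¹ * C < 1 := by
          rw [inv_mul_lt_iff₀ (by linarith : (0:ℝ) < C + 1)]
          linarith
        nlinarith
      linarith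
  -- Baire
  haveI hcY : CompleteSpace Y := Submodule.topologicalClosure.completeSpace p₀
  have hGdense : Dense (⋂ M, U M ∩ B M) :=
    dense_iInter_of_isOpen_nat (fun M => (hopenU M).inter (hopenB M))
      (fun M => (hdenseU M).inter_of_isOpen_left (hdenseB M) (hopenU M))
  obtain ⟨y, hy⟩ := hGdense.nonempty
  simp only [Set.mem_iInter, Set.mem_inter_iff, hU, hB, Set.mem_setOf_eq] at hy
  refine ⟨(y : E), ?_, ?_⟩
  · intro ε hε
    rw [frequently_atTop]
    intro N
    set M : ℕ := max N ⌈1 / ε⌉₊ with hM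
    have hMε : 1 / ((M : ℝ) + 1) < ε := by
      have h1 : 1 / ε ≤ (⌈1 / ε⌉₊ : ℝ) := Nat.le_ceil _
      have h2 : (⌈1 / ε⌉₊ : ℝ) ≤ (M : ℝ) := by exact_mod_cast Nat.cast_le.2 (le_max_right _ _)
      have h3 : 1 / ε < (M : ℝ) + 1 := by linarith
      calc 1 / ((M : ℝ) + 1) < 1 / (1 / ε) := by
            apply one_div_lt_one_div_of_lt (by positivity) h3
        _ = ε := one_div_one_div ε
    obtain ⟨n, hn1, hn2⟩ := (hy M).2
    exact ⟨n, le_trans (le_max_left _ _) hn1, hn2.trans hMε⟩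
  · intro K
    rw [frequently_atTop]
    intro N
    set M : ℕ := max N ⌈K⌉₊ with hM
    have hKM : K ≤ (M : ℝ) := by
      have h1 : K ≤ (⌈K⌉₊ : ℝ) := Nat.le_ceil _
      have h2 : (⌈K⌉₊ : ℝ) ≤ (M : ℝ) := by exact_mod_cast Nat.cast_le.2 (le_max_right _ _)
      linarith
    obtain ⟨n, hn1, hn2⟩ := (hy M).1
    exact ⟨n, le_trans (le_max_left _ _) hn1, lt_of_le_of_lt hKM hn2⟩


/-- Theorem 2.1: for a continuous linear operator `T` on a Banach space `E` (over ℝ or ℂ),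
the following are equivalent: (i) `T` is Li-Yorke chaotic; (ii) `T` has a semi-irregular
vector; (iii) `T` has an irregular vector. -/
theorem liYorke_iff_semiIrregular_iff_irregular
    {𝕜 E : Type*} [RCLike 𝕜] [NormedAddCommGroup E] [NormedSpace 𝕜 E] [CompleteSpace E]
    (T : E →L[𝕜] E) :
    ((∃ S : Set E, ¬ S.Countable ∧ ∀ x ∈ S, ∀ y ∈ S, x ≠ y →
        atTop.liminf (fun n : ℕ => (‖(T ^ n) x - (T ^ n) y‖₊ : ℝ≥0∞)) = 0 ∧
        0 < atTop.limsup (fun n : ℕ => (‖(T ^ n) x - (T ^ n) y‖₊ : ℝ≥0∞))) ↔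
      (∃ x : E, atTop.liminf (fun n : ℕ => (‖(T ^ n) x‖₊ : ℝ≥0∞)) = 0 ∧
        0 < atTop.limsup (fun n : ℕ => (‖(T ^ n) x‖₊ : ℝ≥0∞)))) ∧
    ((∃ x : E, atTop.liminf (fun n : ℕ => (‖(T ^ n) x‖₊ : ℝ≥0∞)) = 0 ∧
        0 < atTop.limsup (fun n : ℕ => (‖(T ^ n) x‖₊ : ℝ≥0∞))) ↔
      (∃ x : E, atTop.liminf (fun n : ℕ => (‖(T ^ n) x‖₊ : ℝ≥0∞)) = 0 ∧
        atTop.limsup (fun n : ℕ => (‖(T ^ n) x‖₊ : ℝ≥0∞)) = ⊤)) := by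
  constructor
  · constructor
    · rintro ⟨S, hSc, hS⟩
      have hex : ∃ u ∈ S, ∃ v ∈ S, u ≠ v := by
        by_contra h
        push_neg at h
        exact hSc (Set.Subsingleton.countable fun a ha b hb => h a ha b hb)
      obtain ⟨u, hu, v, hv, huv⟩ := hex
      obtain ⟨h1, h2⟩ := hS u hu v hv huv
      exact ⟨u - v, by simpa only [map_sub] using h1, by simpa only [map_sub] using h2⟩
    · rintro ⟨x, h1, h2⟩
      obtain ⟨ε, hε, hfb⟩ := (limsup_pos_iff' _).1 h2
      have hlim := (liminf_zero_iff' _).1 h1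
      have hx : x ≠ 0 := by
        rintro rfl
        obtain ⟨n, hn⟩ := hfb.exists
        simp only [map_zero, norm_zero] at hn
        linarith
      refine ⟨Set.range (fun t : ℝ => (t : 𝕜) • x), ?_, ?_⟩
      · intro hc
        have hinj : Function.Injective (fun t : ℝ => (t : 𝕜) • x) := by
          intro s t hst
          dsimp only at hst
          have h0 : ((s : 𝕜) - t) • x = 0 := by rw [sub_smul, hst, sub_self]
          rcases smul_eq_zero.1 h0 with h | h
          · have h' : (s : 𝕜) = (t : 𝕜) := sub_eq_zero.1 h
            exact_mod_cast h'
          · exact absurd h hx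
        have := hc.preimage hinj
        rw [Set.preimage_range] at this
        exact Cardinal.not_countable_real this
      · rintro _ ⟨s, rfl⟩ _ ⟨t, rfl⟩ hne
        dsimp only at hne ⊢
        have hst : s ≠ t := fun h => hne (by rw [h])
        have hd : 0 < |s - t| := abs_pos.2 (sub_ne_zero.2 hst)
        have hnorm : ∀ n : ℕ,
            ‖(T ^ n) ((s : 𝕜) • x) - (T ^ n) ((t : 𝕜) • x)‖ = |s - t| * ‖(T ^ n) x‖ := by
          intro n
          rw [map_smul, map_smul, ← sub_smul, norm_smul]
          congr 1
          rw [show (s : 𝕜) - (t : 𝕜) = ((s - t : ℝ) : 𝕜) by push_cast; ring]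
          exact RCLike.norm_ofReal _
        constructor
        · refine (liminf_zero_iff' _).2 fun δ hδ => ?_
          refine (hlim (δ / |s - t|) (by positivity)).mono fun n hn => ?_
          rw [hnorm n]
          calc |s - t| * ‖(T ^ n) x‖ < |s - t| * (δ / |s - t|) :=
                mul_lt_mul_of_pos_left hn hd
            _ = δ := by field_simp
        · refine (limsup_pos_iff' _).2 ⟨|s - t| * ε, by positivity, ?_⟩
          refine hfb.mono fun n hn => ?_
          rw [hnorm n]
          exact mul_le_mul_of_nonneg_left hn hd.le
  · constructor
    · rintro ⟨x, h1, h2⟩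
      obtain ⟨ε, hε, hfb⟩ := (limsup_pos_iff' _).1 h2
      obtain ⟨y, hy1, hy2⟩ := semi_to_irregular T x ((liminf_zero_iff' _).1 h1) ε hε hfb
      exact ⟨y, (liminf_zero_iff' _).2 hy1, (limsup_top_iff' _).2 hy2⟩
    · rintro ⟨x, h1, h2⟩
      refine ⟨x, h1, ?_⟩
      rw [h2]
      exact ENNReal.zero_lt_top
end

section
/- Let (X, 𝓕, μ) be a σ-finite measure space, Φ an N-function satisfying the Δ₂-condition globally, and φ : X → X a nonsingular measurable map with μ(φ⁻¹(F)) ≤ c μ(F) for every F ∈ 𝓕 and some c > 0. Then the composition operator C_φ on L^Φ(μ) is Li-Yorke chaotic if and only if there exist a nonempty countable family {F_i}_{i∈I} of measurable sets with 0 < μ(F_i) < ∞ for all i ∈ I and a strictly increasing sequence (β_j)_{j∈ℕ} of positive integers such that: (I) for every i ∈ I, lim_{j→∞} Φ⁻¹(1/μ(φ^{-β_j}(F_i))) = ∞, and (II) sup{ Φ⁻¹(1/μ(F_i)) / Φ⁻¹(1/μ(φ^{-n}(F_i))) : i ∈ I, n ∈ ℕ } = ∞. -/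
open MeasureTheory Filter Topology Set
open scoped ENNReal NNReal

noncomputable section

/-- A Young function: an even convex function `Φ : ℝ → [0,∞]` with `Φ 0 = 0` and
`Φ x → ∞` as `x → ∞`. -/
structure IsYoungFunction (Φ : ℝ → ℝ≥0∞) : Prop where
  even : ∀ x : ℝ, Φ (-x) = Φ x
  convex : ∀ x y : ℝ, ∀ a b : ℝ≥0, a + b = 1 →
    Φ ((a : ℝ) * x + (b : ℝ) * y) ≤ (a : ℝ≥0∞) * Φ x + (b : ℝ≥0∞) * Φ y
  map_zero : Φ 0 = 0
  tendsto_atTop : Tendsto Φ atTop (nhds ⊤)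

/-- An N-function: a finite-valued Young function vanishing exactly at `0`, with
`Φ x / x → 0` as `x → 0⁺` and `Φ x / x → ∞` as `x → ∞`. -/
structure IsNFunction (Φ : ℝ → ℝ≥0∞) extends IsYoungFunction Φ : Prop where
  lt_top : ∀ x : ℝ, Φ x < ⊤
  eq_zero_iff : ∀ x : ℝ, Φ x = 0 ↔ x = 0
  tendsto_div_zero : Tendsto (fun x : ℝ => Φ x / ENNReal.ofReal x) (nhdsWithin 0 (Set.Ioi 0)) (nhds 0)
  tendsto_div_atTop : Tendsto (fun x : ℝ => Φ x / ENNReal.ofReal x) atTop (nhds ⊤)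

/-- The Δ₂-condition, globally: `Φ (2 x) ≤ K Φ x` for all `x ≥ 0`, for some `K > 0`. -/
def Delta2Global (Φ : ℝ → ℝ≥0∞) : Prop :=
  ∃ K : ℝ≥0, 0 < K ∧ ∀ x : ℝ, 0 ≤ x → Φ (2 * x) ≤ (K : ℝ≥0∞) * Φ x

/-- The generalized inverse `Φ⁻¹ (y) = inf {x ≥ 0 : Φ x > y}` (with `inf ∅ = ∞`). -/
def youngInv (Φ : ℝ → ℝ≥0∞) (y : ℝ≥0∞) : ℝ≥0∞ :=
  ⨅ (x : ℝ) (_ : 0 ≤ x) (_ : y < Φ x), ENNReal.ofReal x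

/-- The Luxemburg (gauge) norm `N_Φ (f) = inf {k > 0 : ∫ Φ (f / k) dμ ≤ 1}`
(with `inf ∅ = ∞`). -/
def luxNorm {X : Type*} [MeasurableSpace X] (Φ : ℝ → ℝ≥0∞) (μ : Measure X)
    (f : X → ℝ) : ℝ≥0∞ :=
  ⨅ (k : ℝ) (_ : 0 < k) (_ : ∫⁻ x, Φ (f x / k) ∂μ ≤ 1), ENNReal.ofReal k

/-- Membership in the Orlicz space `L^Φ(μ)`: `f` is measurable and
`∫ Φ (k f) dμ < ∞` for some `k > 0`. -/
def MemOrlicz {X : Type*} [MeasurableSpace X] (Φ : ℝ → ℝ≥0∞) (μ : Measure X)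
    (f : X → ℝ) : Prop :=
  Measurable f ∧ ∃ k : ℝ, 0 < k ∧ ∫⁻ x, Φ (k * f x) ∂μ < ⊤

/-- Li-Yorke chaos for the composition operator `C_φ f = f ∘ φ` on `L^Φ(μ)`:
there is an uncountable set `S ⊆ L^Φ(μ)` of pairwise not μ-a.e. equal functions such
that every pair of not μ-a.e. equal members is a Li-Yorke pair for `C_φ`. -/
def CompLiYorkeChaotic {X : Type*} [MeasurableSpace X] (Φ : ℝ → ℝ≥0∞) (μ : Measure X)
    (φ : X → X) : Prop :=
  ∃ S : Set (X → ℝ), ¬ S.Countable ∧ (∀ f ∈ S, MemOrlicz Φ μ f) ∧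
    (∀ f ∈ S, ∀ g ∈ S, f ≠ g → ¬ f =ᵐ[μ] g) ∧
    ∀ f ∈ S, ∀ g ∈ S, ¬ f =ᵐ[μ] g →
      atTop.liminf (fun n : ℕ => luxNorm Φ μ ((f - g) ∘ φ^[n])) = 0 ∧
      0 < atTop.limsup (fun n : ℕ => luxNorm Φ μ ((f - g) ∘ φ^[n]))
section Phi

variable {Φ : ℝ → ℝ≥0∞}

theorem IsNFunction.abs_eq (hΦ : IsNFunction Φ) (x : ℝ) : Φ x = Φ |x| := by
  rcases abs_cases x with ⟨h, _⟩ | ⟨h, _⟩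
  · rw [h]
  · rw [h, hΦ.even]

theorem IsNFunction.mono (hΦ : IsNFunction Φ) {x y : ℝ} (hx : 0 ≤ x) (hxy : x ≤ y) :
    Φ x ≤ Φ y := by
  rcases eq_or_lt_of_le (hx.trans hxy) with hy | hy
  · have hx0 : x = 0 := le_antisymm (hxy.trans hy.symm.le) hx
    rw [hx0, ← hy, hΦ.map_zero]
  · have hyne : y ≠ 0 := ne_of_gt hy
    have ha : 0 ≤ x / y := div_nonneg hx hy.le
    have ha1 : x / y ≤ 1 := (div_le_one hy).2 hxy
    set a : ℝ≥0 := ⟨x / y, ha⟩ with hadef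
    have ha1' : a ≤ 1 := by exact_mod_cast ha1
    have hsum : a + (1 - a) = 1 := add_tsub_cancel_of_le ha1'
    have := hΦ.convex y 0 a (1 - a) hsum
    have harg : (a : ℝ) * y + ((1 - a : ℝ≥0) : ℝ) * 0 = x := by
      simp only [mul_zero, add_zero]
      show x / y * y = x
      field_simp
    rw [harg] at this
    refine this.trans ?_
    rw [hΦ.map_zero, mul_zero, add_zero]
    exact mul_le_of_le_one_left (zero_le) (by exact_mod_cast ha1')

/-- scaling down: `Φ (a x) ≤ a Φ x` for `0 ≤ a ≤ 1`. -/
theorem IsNFunction.smul_le (hΦ : IsNFunction Φ) {a x : ℝ} (ha : 0 ≤ a) (ha1 : a ≤ 1)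
    (hx : 0 ≤ x) : Φ (a * x) ≤ ENNReal.ofReal a * Φ x := by
  set a' : ℝ≥0 := ⟨a, ha⟩ with hadef
  have ha1' : a' ≤ 1 := by exact_mod_cast ha1
  have hsum : a' + (1 - a') = 1 := add_tsub_cancel_of_le ha1'
  have := hΦ.convex x 0 a' (1 - a') hsum
  have harg : (a' : ℝ) * x + ((1 - a' : ℝ≥0) : ℝ) * 0 = a * x := by
    simp [hadef]; exact Or.inl rfl
  rw [harg] at this
  rw [hΦ.map_zero, mul_zero, add_zero] at this
  refine this.trans_eq ?_
  congr 1
  rw [hadef]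
  simp [ENNReal.ofReal, Real.toNNReal_of_nonneg ha]; rfl

/-- scaling up: `b Φ x ≤ Φ (b x)` for `1 ≤ b`. -/
theorem IsNFunction.le_smul (hΦ : IsNFunction Φ) {b x : ℝ} (hb : 1 ≤ b) (hx : 0 ≤ x) :
    ENNReal.ofReal b * Φ x ≤ Φ (b * x) := by
  have hb0 : 0 < b := lt_of_lt_of_le one_pos hb
  have h1 : Φ ((1 / b) * (b * x)) ≤ ENNReal.ofReal (1 / b) * Φ (b * x) :=
    hΦ.smul_le (by positivity) (by rw [div_le_one hb0]; exact hb)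
      (by positivity)
  have harg : (1 / b) * (b * x) = x := by field_simp
  rw [harg] at h1
  calc ENNReal.ofReal b * Φ x ≤ ENNReal.ofReal b * (ENNReal.ofReal (1 / b) * Φ (b * x)) :=
        mul_le_mul_right h1 _
    _ = (ENNReal.ofReal b * ENNReal.ofReal (1 / b)) * Φ (b * x) := by ring
    _ = Φ (b * x) := by
        rw [← ENNReal.ofReal_mul hb0.le]
        rw [mul_one_div, div_self hb0.ne', ENNReal.ofReal_one, one_mul]

theorem IsNFunction.pos (hΦ : IsNFunction Φ) {x : ℝ} (hx : 0 < x) : 0 < Φ x := by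
  rcases eq_or_lt_of_le ((zero_le (a := Φ x))) with h | h
  · exact absurd ((hΦ.eq_zero_iff x).1 h.symm) hx.ne'
  · exact h

/-- the real-valued version of Φ. -/
theorem IsNFunction.convexOn_toReal (hΦ : IsNFunction Φ) :
    ConvexOn ℝ Set.univ (fun x => (Φ x).toReal) := by
  refine ⟨convex_univ, ?_⟩
  intro x _ y _ a b ha hb hab
  set a' : ℝ≥0 := ⟨a, ha⟩
  set b' : ℝ≥0 := ⟨b, hb⟩
  have hsum : a' + b' = 1 := by
    have : ((a' + b' : ℝ≥0) : ℝ) = ((1:ℝ≥0) : ℝ) := by push_cast; exact hab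
    exact_mod_cast this
  have h := hΦ.convex x y a' b' hsum
  have hfin : (a' : ℝ≥0∞) * Φ x + (b' : ℝ≥0∞) * Φ y ≠ ⊤ := by
    refine ENNReal.add_ne_top.2 ⟨?_, ?_⟩ <;>
      exact ENNReal.mul_ne_top (by simp) (hΦ.lt_top _).ne
  have := ENNReal.toReal_mono hfin h
  simp only [smul_eq_mul]
  refine this.trans_eq ?_
  rw [ENNReal.toReal_add (ENNReal.mul_ne_top (by simp) (hΦ.lt_top _).ne)
    (ENNReal.mul_ne_top (by simp) (hΦ.lt_top _).ne), ENNReal.toReal_mul, ENNReal.toReal_mul]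
  norm_cast

theorem IsNFunction.continuous_toReal (hΦ : IsNFunction Φ) :
    Continuous (fun x => (Φ x).toReal) := by
  rw [← continuousOn_univ]
  exact hΦ.convexOn_toReal.continuousOn isOpen_univ

theorem IsNFunction.eq_ofReal_toReal (hΦ : IsNFunction Φ) (x : ℝ) :
    Φ x = ENNReal.ofReal ((Φ x).toReal) := by
  rw [ENNReal.ofReal_toReal (hΦ.lt_top x).ne]

theorem IsNFunction.continuous (hΦ : IsNFunction Φ) : Continuous Φ := by
  have : Φ = fun x => ENNReal.ofReal ((Φ x).toReal) := funext hΦ.eq_ofReal_toReal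
  rw [this]
  exact ENNReal.continuous_ofReal.comp hΦ.continuous_toReal

theorem IsNFunction.measurable (hΦ : IsNFunction Φ) : Measurable Φ :=
  hΦ.continuous.measurable

end Phi
section YoungInv

variable {Φ : ℝ → ℝ≥0∞}

theorem youngInv_le {x : ℝ} {y : ℝ≥0∞} (hx : 0 ≤ x) (h : y < Φ x) :
    youngInv Φ y ≤ ENNReal.ofReal x := by
  unfold youngInv
  exact iInf_le_of_le x (iInf_le_of_le hx (iInf_le _ h))

theorem le_youngInv {b y : ℝ≥0∞} (h : ∀ x : ℝ, 0 ≤ x → y < Φ x → b ≤ ENNReal.ofReal x) :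
    b ≤ youngInv Φ y := by
  unfold youngInv
  exact le_iInf fun x => le_iInf fun hx => le_iInf fun hy => h x hx hy

theorem youngInv_mono (Φ : ℝ → ℝ≥0∞) {y y' : ℝ≥0∞} (h : y ≤ y') :
    youngInv Φ y ≤ youngInv Φ y' :=
  le_youngInv fun x hx hy => youngInv_le hx (lt_of_le_of_lt h hy)

theorem youngInv_top (hΦ : IsNFunction Φ) : youngInv Φ ⊤ = ⊤ := by
  unfold youngInv
  simp only [iInf_eq_top]
  intro x _ h
  exact absurd h (not_lt_of_ge le_top)

/-- if `Φ x₀ ≤ y` then `x₀ ≤ Φ⁻¹ y`. -/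
theorem ofReal_le_youngInv (hΦ : IsNFunction Φ) {x₀ : ℝ} {y : ℝ≥0∞} (hx : 0 ≤ x₀)
    (h : Φ x₀ ≤ y) : ENNReal.ofReal x₀ ≤ youngInv Φ y := by
  refine le_youngInv fun x hx' hy => ?_
  by_contra hcon
  push_neg at hcon
  have hxx : x < x₀ := by
    have := (ENNReal.ofReal_lt_ofReal_iff_of_nonneg hx').1 hcon
    exact this
  exact absurd (lt_of_le_of_lt ((hΦ.mono hx' hxx.le).trans h) hy) (lt_irrefl _)

/-- if `Φ⁻¹ y < x` then `y < Φ x`. -/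
theorem lt_of_youngInv_lt (hΦ : IsNFunction Φ) {x : ℝ} {y : ℝ≥0∞} (hx : 0 ≤ x)
    (h : youngInv Φ y < ENNReal.ofReal x) : y < Φ x := by
  by_contra hcon
  push_neg at hcon
  exact absurd (ofReal_le_youngInv hΦ hx hcon) (not_le_of_gt h)

/-- if `x < Φ⁻¹ y` then `Φ x ≤ y`. -/
theorem Φ_le_of_lt_youngInv (hΦ : IsNFunction Φ) {x : ℝ} {y : ℝ≥0∞} (hx : 0 ≤ x)
    (h : ENNReal.ofReal x < youngInv Φ y) : Φ x ≤ y := by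
  by_contra hcon
  push_neg at hcon
  exact absurd (youngInv_le hx hcon) (not_le_of_gt h)

theorem youngInv_lt_top (hΦ : IsNFunction Φ) {y : ℝ≥0∞} (hy : y ≠ ⊤) :
    youngInv Φ y < ⊤ := by
  have h1 : ∀ᶠ x in atTop, Φ x ∈ Set.Ioi y :=
    hΦ.tendsto_atTop.eventually (isOpen_Ioi.mem_nhds (lt_top_iff_ne_top.2 hy))
  obtain ⟨x, hx0, hx⟩ := (h1.and (eventually_ge_atTop (0:ℝ))).exists
  exact lt_of_le_of_lt (youngInv_le hx hx0) ENNReal.ofReal_lt_top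

theorem youngInv_pos (hΦ : IsNFunction Φ) {y : ℝ≥0∞} (hy : 0 < y) :
    0 < youngInv Φ y := by
  have h0 : Φ 0 < y := by rw [hΦ.map_zero]; exact hy
  have h1 : ∀ᶠ x in nhds (0:ℝ), Φ x < y :=
    hΦ.continuous.tendsto 0 |>.eventually (Filter.Tendsto.eventually_lt_const h0 tendsto_id) |>.mono
      (fun x hx => hx) |>.mono (fun x hx => hx)
  obtain ⟨δ, hδ, hball⟩ := Metric.eventually_nhds_iff.1 h1
  have : ENNReal.ofReal (δ/2) ≤ youngInv Φ y := by
    refine le_youngInv fun x hx hxy => ?_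
    refine ENNReal.ofReal_le_ofReal ?_
    by_contra hcon
    push_neg at hcon
    have hmem : dist x 0 < δ := by
      rw [Real.dist_eq, sub_zero, abs_of_nonneg hx]
      linarith
    exact absurd hxy (not_lt_of_ge (hball hmem).le)
  refine lt_of_lt_of_le ?_ this
  simp [ENNReal.ofReal_pos]; linarith

theorem Φ_youngInv (hΦ : IsNFunction Φ) {y : ℝ≥0∞} (hy : y ≠ ⊤) :
    Φ ((youngInv Φ y).toReal) = y := by
  set v := youngInv Φ y with hv
  have hvt : v < ⊤ := youngInv_lt_top hΦ hy
  have hvr : v = ENNReal.ofReal v.toReal := by rw [ENNReal.ofReal_toReal hvt.ne]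
  have hvr0 : 0 ≤ v.toReal := ENNReal.toReal_nonneg
  refine le_antisymm ?_ ?_
  · -- Φ (v.toReal) ≤ y by left continuity
    have hseq : Tendsto (fun n : ℕ => v.toReal - v.toReal / (n+2)) atTop (nhds v.toReal) := by
      have : Tendsto (fun n : ℕ => v.toReal / ((n:ℝ)+2)) atTop (nhds 0) := by
        apply Tendsto.div_atTop tendsto_const_nhds
        exact tendsto_atTop_add_const_right _ _ tendsto_natCast_atTop_atTop
      simpa using (tendsto_const_nhds (x := v.toReal)).sub this
    have hΦseq : Tendsto (fun n : ℕ => Φ (v.toReal - v.toReal / (n+2))) atTop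
        (nhds (Φ v.toReal)) := (hΦ.continuous.tendsto _).comp hseq
    refine le_of_tendsto hΦseq (Filter.Eventually.of_forall fun n => ?_)
    rcases eq_or_lt_of_le hvr0 with h0 | h0
    · have : v.toReal - v.toReal / (n+2) = 0 := by rw [← h0]; ring
      rw [this, hΦ.map_zero]; exact zero_le
    · have hlt : v.toReal / ((n:ℝ)+2) < v.toReal := by
        apply div_lt_self h0
        have : (0:ℝ) ≤ (n:ℝ) := n.cast_nonneg; linarith
      have hpos : 0 < v.toReal - v.toReal / (n+2) := by linarith
      refine Φ_le_of_lt_youngInv hΦ hpos.le ?_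
      calc ENNReal.ofReal (v.toReal - v.toReal / (n+2)) < ENNReal.ofReal v.toReal := by
            refine ENNReal.ofReal_lt_ofReal_iff (by positivity) |>.2 ?_
            have : (0:ℝ) < v.toReal / (n+2) := by positivity
            linarith
        _ = v := hvr.symm
        _ = youngInv Φ y := hv
  · -- y ≤ Φ (v.toReal) by right continuity
    have hseq : Tendsto (fun n : ℕ => v.toReal + 1 / (n+1)) atTop (nhds v.toReal) := by
      have : Tendsto (fun n : ℕ => 1 / ((n:ℝ)+1)) atTop (nhds 0) := by
        apply Tendsto.div_atTop tendsto_const_nhds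
        exact tendsto_atTop_add_const_right _ _ tendsto_natCast_atTop_atTop
      simpa using (tendsto_const_nhds (x := v.toReal)).add this
    have hΦseq : Tendsto (fun n : ℕ => Φ (v.toReal + 1 / (n+1))) atTop
        (nhds (Φ v.toReal)) := (hΦ.continuous.tendsto _).comp hseq
    refine ge_of_tendsto hΦseq (Filter.Eventually.of_forall fun n => ?_)
    have hpos : (0:ℝ) < 1 / ((n:ℝ)+1) := by positivity
    refine (lt_of_youngInv_lt hΦ (by positivity) ?_).le
    calc youngInv Φ y = v := hv.symm
      _ = ENNReal.ofReal v.toReal := hvr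
      _ < ENNReal.ofReal (v.toReal + 1 / (n+1)) :=
          ENNReal.ofReal_lt_ofReal_iff (by positivity) |>.2 (by linarith)

end YoungInv
section More

variable {Φ : ℝ → ℝ≥0∞}

theorem tendsto_youngInv_one_div_top (hΦ : IsNFunction Φ) {d : ℕ → ℝ≥0∞}
    (hd : Tendsto d atTop (nhds 0)) :
    Tendsto (fun j => youngInv Φ (1 / d j)) atTop (nhds ⊤) := by
  rw [ENNReal.tendsto_nhds_top_iff_nnreal]
  intro M
  set x₀ : ℝ := (M:ℝ) + 1 with hx₀
  have hx₀0 : 0 ≤ x₀ := by positivity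
  have hΦx₀ : Φ x₀ ≠ ⊤ := (hΦ.lt_top _).ne
  have hΦx₀0 : 0 < (Φ x₀)⁻¹ := ENNReal.inv_pos.2 hΦx₀
  have hev : ∀ᶠ j in atTop, d j < (Φ x₀)⁻¹ :=
    hd.eventually (Filter.Tendsto.eventually_lt_const hΦx₀0 tendsto_id)
  filter_upwards [hev] with j hj
  have h1 : Φ x₀ < 1 / d j := by
    rw [one_div]
    exact ENNReal.lt_inv_iff_lt_inv.1 hj
  calc (M : ℝ≥0∞) < ENNReal.ofReal x₀ := by
        rw [← ENNReal.ofReal_coe_nnreal]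
        exact ENNReal.ofReal_lt_ofReal_iff (by positivity) |>.2 (by simp [hx₀])
    _ ≤ youngInv Φ (1 / d j) := ofReal_le_youngInv hΦ hx₀0 h1.le

theorem youngInv_div_le (hΦ : IsNFunction Φ) {y b : ℝ≥0∞} (hb : 1 ≤ b) (hbt : b ≠ ⊤) :
    youngInv Φ y / b ≤ youngInv Φ (y / b) := by
  have hb0 : b ≠ 0 := by intro h; rw [h] at hb; simp at hb
  have hbr : 1 ≤ b.toReal := by
    rw [← ENNReal.ofReal_one, ← ENNReal.ofReal_toReal hbt] at hb
    exact (ENNReal.ofReal_le_ofReal_iff ENNReal.toReal_nonneg).1 hb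
  refine le_youngInv fun x hx hxy => ?_
  have key : y < Φ (b.toReal * x) := by
    have h1 : ENNReal.ofReal b.toReal * Φ x ≤ Φ (b.toReal * x) := hΦ.le_smul hbr hx
    rw [ENNReal.ofReal_toReal hbt] at h1
    refine lt_of_lt_of_le ?_ h1
    calc y = b * (y / b) := (ENNReal.mul_div_cancel hb0 hbt).symm
      _ < b * Φ x := by
        exact (ENNReal.mul_lt_mul_iff_right hb0 hbt).2 hxy
  have h2 : youngInv Φ y ≤ ENNReal.ofReal (b.toReal * x) := youngInv_le (by positivity) key
  rw [ENNReal.ofReal_mul ENNReal.toReal_nonneg, ENNReal.ofReal_toReal hbt, mul_comm] at h2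
  exact ENNReal.div_le_of_le_mul h2

theorem ENNReal.div_div_self_le {a b : ℝ≥0∞} (ha0 : a ≠ 0) (hat : a ≠ ⊤) (hb0 : b ≠ 0)
    (hbt : b ≠ ⊤) : a / (a / b) ≤ b := by
  have h1 : a / b ≠ 0 := by
    simp [ENNReal.div_eq_zero_iff, ha0, hbt]
  have h2 : a / b ≠ ⊤ := by
    simp [ENNReal.div_eq_top, ha0, hat, hb0]
  rw [ENNReal.div_le_iff h1 h2, ENNReal.mul_div_cancel hb0 hbt]

theorem Delta2Global.pow (hΔ : Delta2Global Φ) :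
    ∃ K : ℝ≥0, 0 < K ∧ ∀ (l : ℕ) (x : ℝ), 0 ≤ x →
      Φ ((2:ℝ)^l * x) ≤ (K : ℝ≥0∞)^l * Φ x := by
  obtain ⟨K, hK, h⟩ := hΔ
  refine ⟨K, hK, fun l => ?_⟩
  induction l with
  | zero => intro x hx; simp
  | succ l ih =>
    intro x hx
    have : (2:ℝ)^(l+1) * x = 2 * ((2:ℝ)^l * x) := by ring
    rw [this]
    calc Φ (2 * ((2:ℝ)^l * x)) ≤ (K:ℝ≥0∞) * Φ ((2:ℝ)^l * x) := h _ (by positivity)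
      _ ≤ (K:ℝ≥0∞) * ((K:ℝ≥0∞)^l * Φ x) := mul_le_mul_right (ih x hx) _
      _ = (K:ℝ≥0∞)^(l+1) * Φ x := by ring

end More

section Lux

variable {X : Type*} [MeasurableSpace X] {μ : MeasureTheory.Measure X} {Φ : ℝ → ℝ≥0∞}

theorem luxNorm_le_of_modular {f : X → ℝ} {r : ℝ} (hr : 0 < r)
    (h : ∫⁻ x, Φ (f x / r) ∂μ ≤ 1) : luxNorm Φ μ f ≤ ENNReal.ofReal r := by
  unfold luxNorm
  exact iInf_le_of_le r (iInf_le_of_le hr (iInf_le _ h))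

theorem modular_le_of_luxNorm_lt (hΦ : IsNFunction Φ) {f : X → ℝ} {r : ℝ}
    (h : luxNorm Φ μ f < ENNReal.ofReal r) : ∫⁻ x, Φ (f x / r) ∂μ ≤ 1 := by
  have hr : 0 < r := ENNReal.ofReal_pos.1 (lt_of_le_of_lt (zero_le) h)
  unfold luxNorm at h
  simp only [iInf_lt_iff] at h
  obtain ⟨k, hk, hadm, hlt⟩ := h
  have hkr : k < r := (ENNReal.ofReal_lt_ofReal_iff_of_nonneg hk.le).1 hlt
  refine le_trans (MeasureTheory.lintegral_mono fun x => ?_) hadm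
  rw [hΦ.abs_eq (f x / r), hΦ.abs_eq (f x / k), abs_div, abs_of_pos hr, abs_div, abs_of_pos hk]
  exact hΦ.mono (by positivity) (div_le_div_of_nonneg_left (abs_nonneg _) hk hkr.le)

theorem luxNorm_mono_ae (hΦ : IsNFunction Φ) {f g : X → ℝ}
    (h : ∀ᵐ x ∂μ, |f x| ≤ |g x|) : luxNorm Φ μ f ≤ luxNorm Φ μ g := by
  unfold luxNorm
  refine le_iInf fun k => le_iInf fun hk => le_iInf fun hadm => ?_
  refine iInf_le_of_le k (iInf_le_of_le hk (iInf_le_of_le ?_ le_rfl))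
  refine le_trans (MeasureTheory.lintegral_mono_ae (h.mono fun x hx => ?_)) hadm
  rw [hΦ.abs_eq (f x / k), hΦ.abs_eq (g x / k), abs_div, abs_of_pos hk, abs_div, abs_of_pos hk]
  exact hΦ.mono (by positivity) (by gcongr)

theorem luxNorm_nat_smul_le (hΦ : IsNFunction Φ) {f : X → ℝ} {t : ℝ} {m : ℕ}
    (hm : 1 ≤ m) (h : |t| ≤ m) :
    luxNorm Φ μ (fun x => t * f x) ≤ (m : ℝ≥0∞) * luxNorm Φ μ f := by
  have hm0 : (m:ℝ≥0∞) ≠ 0 := by exact_mod_cast Nat.pos_of_ne_zero (by omega) |>.ne'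
  have hmt : (m:ℝ≥0∞) ≠ ⊤ := ENNReal.natCast_ne_top m
  have key : ∀ k : ℝ, 0 < k → (∫⁻ x, Φ (f x / k) ∂μ ≤ 1) →
      luxNorm Φ μ (fun x => t * f x) ≤ (m:ℝ≥0∞) * ENNReal.ofReal k := by
    intro k hk hadm
    have hmk : (0:ℝ) < m * k := by positivity
    have : ∫⁻ x, Φ (t * f x / (m * k)) ∂μ ≤ 1 := by
      refine le_trans (MeasureTheory.lintegral_mono fun x => ?_) hadm
      rw [hΦ.abs_eq (t * f x / (m*k)), hΦ.abs_eq (f x / k), abs_div, abs_of_pos hmk,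
        abs_div, abs_of_pos hk, abs_mul]
      refine hΦ.mono (by positivity) ?_
      rw [div_le_div_iff₀ hmk hk]
      have h1 : |t| * |f x| * k ≤ (m * |f x|) * k := by
        have := mul_le_mul_of_nonneg_right h (abs_nonneg (f x))
        nlinarith [abs_nonneg (f x), hk.le]
      calc |t| * |f x| * k ≤ m * |f x| * k := h1
        _ = |f x| * (m * k) := by ring
    calc luxNorm Φ μ (fun x => t * f x) ≤ ENNReal.ofReal (m * k) := luxNorm_le_of_modular hmk this
      _ = (m:ℝ≥0∞) * ENNReal.ofReal k := by
          rw [ENNReal.ofReal_mul (by positivity)]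
          congr 1
          simp [ENNReal.ofReal_natCast]
  set L := luxNorm Φ μ (fun x => t * f x)
  have hdiv : L / m ≤ luxNorm Φ μ f := by
    unfold luxNorm
    refine le_iInf fun k => le_iInf fun hk => le_iInf fun hadm => ?_
    have := key k hk hadm
    rw [mul_comm] at this
    exact ENNReal.div_le_of_le_mul this
  calc L = (m:ℝ≥0∞) * (L / m) := (ENNReal.mul_div_cancel hm0 hmt).symm
    _ ≤ (m:ℝ≥0∞) * luxNorm Φ μ f := mul_le_mul_right hdiv _

theorem luxNorm_ge_on_set (hΦ : IsNFunction Φ) {A : Set X} (hA : MeasurableSet A)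
    (hAfin : μ A ≠ ⊤) {r : ℝ} (hr : 0 < r) {u : X → ℝ}
    (h : ∀ᵐ x ∂μ, x ∈ A → r ≤ |u x|) :
    ENNReal.ofReal r / youngInv Φ (1 / μ A) ≤ luxNorm Φ μ u := by
  rcases eq_or_ne (μ A) 0 with hA0 | hA0
  · rw [hA0]
    have h1 : (1:ℝ≥0∞) / 0 = ⊤ := by simp
    rw [h1, youngInv_top hΦ, ENNReal.div_top]
    exact zero_le
  have hW0 : 0 < youngInv Φ (1 / μ A) := youngInv_pos hΦ (ENNReal.div_pos one_ne_zero hAfin)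
  have hWt : youngInv Φ (1 / μ A) ≠ ⊤ := (youngInv_lt_top hΦ (by simp [hA0])).ne
  unfold luxNorm
  refine le_iInf fun k => le_iInf fun hk => le_iInf fun hadm => ?_
  have hind : ∫⁻ x, A.indicator (fun _ => Φ (r / k)) x ∂μ ≤ 1 := by
    refine le_trans (MeasureTheory.lintegral_mono_ae (h.mono fun x hx => ?_)) hadm
    by_cases hxA : x ∈ A
    · rw [Set.indicator_of_mem hxA]
      rw [hΦ.abs_eq (u x / k), abs_div, abs_of_pos hk]
      exact hΦ.mono (by positivity) (by gcongr; exact hx hxA)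
    · rw [Set.indicator_of_notMem hxA]; exact zero_le
  rw [MeasureTheory.lintegral_indicator_const hA] at hind
  have hΦle : Φ (r / k) ≤ 1 / μ A := by
    rw [ENNReal.le_div_iff_mul_le (Or.inl hA0) (Or.inl hAfin)]
    exact hind
  have hle : ENNReal.ofReal (r / k) ≤ youngInv Φ (1 / μ A) :=
    ofReal_le_youngInv hΦ (by positivity) hΦle
  rw [ENNReal.div_le_iff hW0.ne' hWt]
  calc ENNReal.ofReal r = ENNReal.ofReal (r / k) * ENNReal.ofReal k := by
        rw [← ENNReal.ofReal_mul (by positivity)]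
        congr 1; field_simp
    _ ≤ youngInv Φ (1 / μ A) * ENNReal.ofReal k := mul_le_mul_left hle _
    _ = ENNReal.ofReal k * youngInv Φ (1 / μ A) := mul_comm _ _

theorem chebyshev_modular (hΦ : IsNFunction Φ) {u : X → ℝ} (hu : Measurable u)
    {r q : ℝ} (hr : 0 < r) (hq : 0 < q) (hmod : ∫⁻ x, Φ (u x / r) ∂μ ≤ 1) :
    μ {x | q ≤ |u x|} ≤ 1 / Φ (q / r) := by
  have hA : MeasurableSet {x | q ≤ |u x|} := measurableSet_le measurable_const hu.abs
  have hind : ∫⁻ x, {x | q ≤ |u x|}.indicator (fun _ => Φ (q / r)) x ∂μ ≤ 1 := by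
    refine le_trans (MeasureTheory.lintegral_mono fun x => ?_) hmod
    by_cases hxA : x ∈ {x | q ≤ |u x|}
    · rw [Set.indicator_of_mem hxA]
      rw [hΦ.abs_eq (u x / r), abs_div, abs_of_pos hr]
      exact hΦ.mono (by positivity) (by gcongr; exact hxA)
    · rw [Set.indicator_of_notMem hxA]; exact zero_le
  rw [MeasureTheory.lintegral_indicator_const hA] at hind
  have hΦ0 : Φ (q / r) ≠ 0 := (hΦ.pos (by positivity)).ne'
  rw [ENNReal.le_div_iff_mul_le (Or.inl hΦ0) (Or.inr ENNReal.one_ne_top)]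
  rw [mul_comm]
  exact hind

end Lux
section Jensen

variable {Φ : ℝ → ℝ≥0∞}

theorem IsNFunction.jensen_finset (hΦ : IsNFunction Φ) (s : Finset ℕ) (w z : ℕ → ℝ)
    (hw : ∀ k ∈ s, 0 ≤ w k) (hsum : ∑ k ∈ s, w k ≤ 1) (hz : ∀ k ∈ s, 0 ≤ z k) :
    Φ (∑ k ∈ s, w k * z k) ≤ ∑ k ∈ s, ENNReal.ofReal (w k) * Φ (z k) := by
  revert hw hsum hz
  induction s using Finset.induction_on generalizing w z with
  | empty => intro _ _ _; simp [hΦ.map_zero]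
  | @insert a s ha ih =>
    intro hw hsum hz
    simp only [Finset.sum_insert ha] at hsum ⊢
    have hwa : 0 ≤ w a := hw a (Finset.mem_insert_self a s)
    have hws : ∀ k ∈ s, 0 ≤ w k := fun k hk => hw k (Finset.mem_insert_of_mem hk)
    have hzs : ∀ k ∈ s, 0 ≤ z k := fun k hk => hz k (Finset.mem_insert_of_mem hk)
    have hW0 : 0 ≤ ∑ k ∈ s, w k := Finset.sum_nonneg hws
    have hwa1 : w a ≤ 1 := by linarith
    rcases eq_or_lt_of_le (by linarith : w a ≤ 1) with hb | hb
    · -- w a = 1, so all other weights are 0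
      have hW : ∑ k ∈ s, w k = 0 := by linarith
      have hwk : ∀ k ∈ s, w k = 0 := by
        intro k hk
        exact le_antisymm (by
          by_contra hcon
          push_neg at hcon
          have := Finset.single_le_sum hws hk
          linarith) (hws k hk)
      have hz0 : ∑ k ∈ s, w k * z k = 0 :=
        Finset.sum_eq_zero fun k hk => by rw [hwk k hk, zero_mul]
      rw [hz0, add_zero]
      refine le_trans (hΦ.smul_le hwa hwa1 (hz a (Finset.mem_insert_self a s))) ?_
      exact le_add_of_nonneg_right (zero_le)
    · -- 0 < 1 - w a
      set b := 1 - w a with hbdef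
      have hb0 : 0 < b := by simp [hbdef]; linarith
      set y := ∑ k ∈ s, (w k / b) * z k with hydef
      have hy0 : 0 ≤ y := Finset.sum_nonneg fun k hk =>
        mul_nonneg (div_nonneg (hws k hk) hb0.le) (hzs k hk)
      have hby : b * y = ∑ k ∈ s, w k * z k := by
        rw [hydef, Finset.mul_sum]
        refine Finset.sum_congr rfl fun k hk => ?_
        field_simp
      set a' : ℝ≥0 := ⟨w a, hwa⟩ with ha'
      set b' : ℝ≥0 := ⟨b, hb0.le⟩ with hb'
      have hsum' : a' + b' = 1 := by
        have : ((a' + b' : ℝ≥0) : ℝ) = ((1:ℝ≥0) : ℝ) := by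
          push_cast; simp [ha', hb', hbdef]; show w a + (1 - w a) = 1; ring
        exact_mod_cast this
      have hconv := hΦ.convex (z a) y a' b' hsum'
      have harg : (a' : ℝ) * z a + (b' : ℝ) * y = w a * z a + ∑ k ∈ s, w k * z k := by
        rw [← hby]; rfl
      rw [harg] at hconv
      have hca : (a' : ℝ≥0∞) = ENNReal.ofReal (w a) := by
        rw [ha']; simp [ENNReal.ofReal, Real.toNNReal_of_nonneg hwa]; rfl
      have hcb : (b' : ℝ≥0∞) = ENNReal.ofReal b := by
        rw [hb']; simp [ENNReal.ofReal, Real.toNNReal_of_nonneg hb0.le]; rfl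
      rw [hca, hcb] at hconv
      refine hconv.trans ?_
      refine add_le_add_right ?_ _
      have hIH : Φ y ≤ ∑ k ∈ s, ENNReal.ofReal (w k / b) * Φ (z k) := by
        refine ih (fun k => w k / b) z (fun k hk => div_nonneg (hws k hk) hb0.le) ?_ hzs
        rw [← Finset.sum_div, div_le_one hb0]
        linarith
      calc ENNReal.ofReal b * Φ y
          ≤ ENNReal.ofReal b * ∑ k ∈ s, ENNReal.ofReal (w k / b) * Φ (z k) :=
            mul_le_mul_right hIH _
        _ = ∑ k ∈ s, ENNReal.ofReal (w k) * Φ (z k) := by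
            rw [Finset.mul_sum]
            refine Finset.sum_congr rfl fun k hk => ?_
            rw [← mul_assoc, ← ENNReal.ofReal_mul hb0.le]
            congr 2
            field_simp

theorem sum_half_pow_le (m : ℕ) : ∑ k ∈ Finset.range m, ((2:ℝ)⁻¹)^(k+1) ≤ 1 := by
  have key : ∀ m : ℕ, ∑ k ∈ Finset.range m, ((2:ℝ)⁻¹)^(k+1) = 1 - ((2:ℝ)⁻¹)^m := by
    intro m
    induction m with
    | zero => simp
    | succ m ih => rw [Finset.sum_range_succ, ih]; ring
  rw [key]
  have : (0:ℝ) ≤ ((2:ℝ)⁻¹)^m := by positivity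
  linarith

theorem ofReal_half_pow (k : ℕ) :
    ENNReal.ofReal (((2:ℝ)⁻¹)^(k+1)) = ((2:ℝ≥0∞)⁻¹)^(k+1) := by
  rw [ENNReal.ofReal_pow (by norm_num)]
  congr 1
  rw [ENNReal.ofReal_inv_of_pos (by norm_num)]
  norm_num

theorem tsum_half_pow : ∑' k : ℕ, ((2:ℝ≥0∞)⁻¹)^(k+1) = 1 := by
  have h1 : ∀ k : ℕ, ((2:ℝ≥0∞)⁻¹)^(k+1) = 2⁻¹ * ((2:ℝ≥0∞)⁻¹)^k := fun k => by
    rw [pow_succ, mul_comm]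
  simp_rw [h1]
  rw [ENNReal.tsum_mul_left, ENNReal.tsum_geometric]
  have h2 : (1:ℝ≥0∞) - 2⁻¹ = 2⁻¹ := by
    refine ENNReal.sub_eq_of_eq_add (by simp) ?_
    rw [ENNReal.inv_two_add_inv_two]
  rw [h2, inv_inv]
  exact ENNReal.inv_mul_cancel (by norm_num) (by norm_num)

theorem IsNFunction.jensen_tsum (hΦ : IsNFunction Φ) {u : ℕ → ℝ} (hu : ∀ k, 0 ≤ u k)
    (hsum : Summable u) :
    Φ (∑' k, u k) ≤ ∑' k, ((2:ℝ≥0∞)⁻¹)^(k+1) * Φ ((2:ℝ)^(k+1) * u k) := by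
  have htend : Tendsto (fun m => ∑ k ∈ Finset.range m, u k) atTop (nhds (∑' k, u k)) :=
    hsum.hasSum.tendsto_sum_nat
  have hΦtend : Tendsto (fun m => Φ (∑ k ∈ Finset.range m, u k)) atTop
      (nhds (Φ (∑' k, u k))) := (hΦ.continuous.tendsto _).comp htend
  refine le_of_tendsto hΦtend (Filter.Eventually.of_forall fun m => ?_)
  have harg : ∑ k ∈ Finset.range m, u k
      = ∑ k ∈ Finset.range m, ((2:ℝ)⁻¹)^(k+1) * ((2:ℝ)^(k+1) * u k) := by
    refine Finset.sum_congr rfl fun k _ => ?_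
    rw [← mul_assoc, ← mul_pow]
    norm_num
  rw [harg]
  refine le_trans (hΦ.jensen_finset (Finset.range m) _ _
    (fun k _ => by positivity) (sum_half_pow_le m)
    (fun k _ => mul_nonneg (by positivity) (hu k))) ?_
  refine le_trans ?_ (ENNReal.sum_le_tsum (Finset.range m))
  refine le_of_eq (Finset.sum_congr rfl fun k _ => ?_)
  rw [ofReal_half_pow]

end Jensen

section MeasIter

variable {X : Type*} [MeasurableSpace X] {μ : MeasureTheory.Measure X} {φ : X → X} {c : ℝ≥0}

theorem iter_bound (hφ : Measurable φ)
    (hbound : ∀ F : Set X, MeasurableSet F → μ (φ ⁻¹' F) ≤ (c : ℝ≥0∞) * μ F)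
    (m : ℕ) {A : Set X} (hA : MeasurableSet A) :
    μ (φ^[m] ⁻¹' A) ≤ (c:ℝ≥0∞)^m * μ A := by
  induction m with
  | zero => simp
  | succ m ih =>
    rw [Function.iterate_succ, Set.preimage_comp]
    calc μ (φ ⁻¹' (φ^[m] ⁻¹' A)) ≤ (c:ℝ≥0∞) * μ (φ^[m] ⁻¹' A) :=
          hbound _ (hφ.iterate m hA)
      _ ≤ (c:ℝ≥0∞) * ((c:ℝ≥0∞)^m * μ A) := mul_le_mul_right ih _
      _ = (c:ℝ≥0∞)^(m+1) * μ A := by ring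

theorem preimage_iterate_add (φ : X → X) (m n : ℕ) (A : Set X) :
    φ^[m + n] ⁻¹' A = φ^[n] ⁻¹' (φ^[m] ⁻¹' A) := by
  ext x
  simp [Set.mem_preimage, Function.iterate_add_apply]

end MeasIter

section SeqRec

theorem exists_seq_rec {T : Type*} (R : ∀ k : ℕ, (Fin k → T) → T → Prop)
    (h : ∀ k (p : Fin k → T), ∃ t, R k p t) :
    ∃ f : ℕ → T, ∀ k, R k (fun m : Fin k => f m) (f k) := by
  let F : (k : ℕ) → Fin k → T := fun k =>
    Nat.rec (motive := fun k => Fin k → T) Fin.elim0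
      (fun k p => Fin.snoc p (Classical.choose (h k p))) k
  let f : ℕ → T := fun k => Classical.choose (h k (F k))
  have hF : ∀ k, F (k+1) = Fin.snoc (F k) (f k) := fun k => rfl
  have hcompat : ∀ k (m : Fin k), F k m = f m := by
    intro k
    induction k with
    | zero => exact fun m => m.elim0
    | succ k ih =>
      intro m
      refine Fin.lastCases ?_ ?_ m
      · rw [hF, Fin.snoc_last]
      · intro i
        rw [hF, Fin.snoc_castSucc, ih i]
  refine ⟨f, fun k => ?_⟩
  have heq : (fun m : Fin k => f m) = F k := funext fun m => (hcompat k m).symm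
  rw [heq]
  exact Classical.choose_spec (h k (F k))

end SeqRec
section Necessity

variable {X : Type*} [MeasurableSpace X]

theorem necessity (μ : Measure X) [SigmaFinite μ]
    (Φ : ℝ → ℝ≥0∞) (hΦ : IsNFunction Φ) (hΔ : Delta2Global Φ)
    (φ : X → X) (hφ : Measurable φ) (c : ℝ≥0) (hc : 0 < c)
    (hbound : ∀ F : Set X, MeasurableSet F → μ (φ ⁻¹' F) ≤ (c : ℝ≥0∞) * μ F)
    (hchaos : CompLiYorkeChaotic Φ μ φ) :
    ∃ (F : ℕ → Set X) (β : ℕ → ℕ), StrictMono β ∧ (∀ j, 0 < β j) ∧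
      (∀ i, MeasurableSet (F i)) ∧ (∀ i, 0 < μ (F i)) ∧ (∀ i, μ (F i) < ⊤) ∧
      (∀ i, Tendsto (fun j : ℕ => youngInv Φ (1 / μ (φ^[β j] ⁻¹' F i))) atTop (nhds ⊤)) ∧
      (⨆ (i : ℕ) (n : ℕ),
        youngInv Φ (1 / μ (F i)) / youngInv Φ (1 / μ (φ^[n] ⁻¹' F i))) = ⊤ := by
  classical
  obtain ⟨S, hScnt, hSmem, hSnae, hSpair⟩ := hchaos
  -- extract two distinct elements
  have hSne : S.Nonempty := by
    rcases S.eq_empty_or_nonempty with h | h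
    · exact absurd (h ▸ Set.countable_empty) hScnt
    · exact h
  obtain ⟨f, hf⟩ := hSne
  have hg' : ∃ g ∈ S, g ≠ f := by
    by_contra hcon
    push_neg at hcon
    exact hScnt ((Set.countable_singleton f).mono fun x hx => hcon x hx)
  obtain ⟨g, hg, hgf⟩ := hg'
  have hnae : ¬ f =ᵐ[μ] g := hSnae f hf g hg (fun h => hgf h.symm)
  obtain ⟨hlinf, hlsup⟩ := hSpair f hf g hg hnae
  set h : X → ℝ := fun x => f x - g x with hhdef
  have hcomp : ∀ (n : ℕ) (x : X), ((f - g) ∘ φ^[n]) x = h (φ^[n] x) := fun _ _ => rfl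
  have hhmeas : Measurable h := (hSmem f hf).1.sub (hSmem g hg).1
  -- membership of h in the Orlicz space
  obtain ⟨kf, hkf, hfint⟩ := (hSmem f hf).2
  obtain ⟨kg, hkg, hgint⟩ := (hSmem g hg).2
  set k₀ : ℝ := min kf kg / 2 with hk₀def
  have hk₀ : 0 < k₀ := by positivity
  have hk₀f : 2 * k₀ ≤ kf := by
    rw [hk₀def]; have := min_le_left kf kg; linarith
  have hk₀g : 2 * k₀ ≤ kg := by
    rw [hk₀def]; have := min_le_right kf kg; linarith
  have hmod0 : ∫⁻ x, Φ (k₀ * h x) ∂μ < ⊤ := by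
    have hptw : ∀ x, Φ (k₀ * h x) ≤
        2⁻¹ * Φ (kf * f x) + 2⁻¹ * Φ (kg * g x) := by
      intro x
      have hsum : ((2:ℝ≥0)⁻¹) + ((2:ℝ≥0)⁻¹) = 1 := by
        rw [← two_mul]; norm_num
      have hconv := hΦ.convex (2 * k₀ * f x) (-(2 * k₀ * g x)) 2⁻¹ 2⁻¹ hsum
      have harg : ((2⁻¹ : ℝ≥0) : ℝ) * (2 * k₀ * f x) + ((2⁻¹ : ℝ≥0) : ℝ) * (-(2 * k₀ * g x))
          = k₀ * h x := by
        push_cast; rw [hhdef]; ring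
      rw [harg, hΦ.even] at hconv
      have hcoe : ((2⁻¹ : ℝ≥0) : ℝ≥0∞) = (2:ℝ≥0∞)⁻¹ := by
        simp
      rw [hcoe] at hconv
      refine hconv.trans (add_le_add ?_ ?_)
      · refine mul_le_mul_right ?_ _
        rw [hΦ.abs_eq (2 * k₀ * f x), hΦ.abs_eq (kf * f x)]
        refine hΦ.mono (abs_nonneg _) ?_
        rw [abs_mul, abs_mul]
        have e3 : |kf * f x| = kf * |f x| := by rw [abs_mul, abs_of_pos hkf]
        rw [e3, abs_of_nonneg (by norm_num : (0:ℝ) ≤ 2), abs_of_pos hk₀]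
        nlinarith [abs_nonneg (f x)]
      · refine mul_le_mul_right ?_ _
        rw [hΦ.abs_eq (2 * k₀ * g x), hΦ.abs_eq (kg * g x)]
        refine hΦ.mono (abs_nonneg _) ?_
        rw [abs_mul, abs_mul]
        have e3 : |kg * g x| = kg * |g x| := by rw [abs_mul, abs_of_pos hkg]
        rw [e3, abs_of_nonneg (by norm_num : (0:ℝ) ≤ 2), abs_of_pos hk₀]
        nlinarith [abs_nonneg (g x)]
    calc ∫⁻ x, Φ (k₀ * h x) ∂μ
        ≤ ∫⁻ x, (2⁻¹ * Φ (kf * f x) + 2⁻¹ * Φ (kg * g x)) ∂μ := lintegral_mono hptw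
      _ = 2⁻¹ * ∫⁻ x, Φ (kf * f x) ∂μ + 2⁻¹ * ∫⁻ x, Φ (kg * g x) ∂μ := by
          rw [lintegral_add_left, lintegral_const_mul, lintegral_const_mul]
          · exact hΦ.measurable.comp (measurable_const.mul (hSmem g hg).1)
          · exact hΦ.measurable.comp (measurable_const.mul (hSmem f hf).1)
          · exact (hΦ.measurable.comp (measurable_const.mul (hSmem f hf).1)).const_mul _
      _ < ⊤ := by
          refine ENNReal.add_lt_top.2 ⟨?_, ?_⟩ <;>
            exact ENNReal.mul_lt_top (by simp) (by assumption)
  -- h is not a.e. zero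
  have hpos0 : μ {x | h x ≠ 0} ≠ 0 := by
    intro hzero
    refine hnae ?_
    have : ∀ᵐ x ∂μ, h x = 0 := by
      rw [MeasureTheory.ae_iff]
      exact hzero
    filter_upwards [this] with x hx
    have : f x - g x = 0 := hx
    linarith
  -- the level sets
  set H : ℝ → Set X := fun q => {x | q ≤ |h x|} with hHdef
  have hHmeas : ∀ q, MeasurableSet (H q) := fun q =>
    measurableSet_le measurable_const hhmeas.abs
  have hHfin : ∀ q : ℝ, 0 < q → μ (H q) < ⊤ := by
    intro q hq
    have hind : ∫⁻ x, (H q).indicator (fun _ => Φ (k₀ * q)) x ∂μ ≤ ∫⁻ x, Φ (k₀ * h x) ∂μ := by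
      refine lintegral_mono fun x => ?_
      by_cases hx : x ∈ H q
      · rw [Set.indicator_of_mem hx]
        rw [hΦ.abs_eq (k₀ * h x), abs_mul, abs_of_pos hk₀]
        exact hΦ.mono (by positivity) (by
          have : q ≤ |h x| := hx
          nlinarith)
      · rw [Set.indicator_of_notMem hx]; exact zero_le
    rw [lintegral_indicator_const (hHmeas q)] at hind
    have hΦq : Φ (k₀ * q) ≠ 0 := (hΦ.pos (by positivity)).ne'
    have : μ (H q) ≤ (∫⁻ x, Φ (k₀ * h x) ∂μ) / Φ (k₀ * q) := by
      rw [ENNReal.le_div_iff_mul_le (Or.inl hΦq) (Or.inr hmod0.ne)]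
      rw [mul_comm]; exact hind
    exact lt_of_le_of_lt this (ENNReal.div_lt_top hmod0.ne hΦq)
  have hHunion : {x | h x ≠ 0} = ⋃ m : ℕ, H (1 / (m + 1)) := by
    ext x
    simp only [Set.mem_setOf_eq, Set.mem_iUnion, hHdef]
    constructor
    · intro hx
      have habs : 0 < |h x| := abs_pos.2 hx
      obtain ⟨m, hm⟩ := exists_nat_ge (1 / |h x|)
      refine ⟨m, ?_⟩
      rw [div_le_iff₀ (by positivity)]
      rw [div_le_iff₀ habs] at hm
      have hm0 : (0:ℝ) ≤ (m:ℝ) := Nat.cast_nonneg m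
      nlinarith
    · rintro ⟨m, hm⟩
      have : (0:ℝ) < 1 / (m + 1) := by positivity
      intro hx0
      rw [hx0] at hm
      simp at hm
      linarith
  have hm₀ : ∃ m₀ : ℕ, 0 < μ (H (1 / (m₀ + 1))) := by
    by_contra hcon
    push_neg at hcon
    simp only [le_zero_iff] at hcon
    refine hpos0 ?_
    rw [hHunion]
    exact measure_iUnion_null fun m => hcon m
  obtain ⟨m₀, hm₀pos⟩ := hm₀
  -- the β sequence
  have hfreq : ∀ j : ℕ, ∃ᶠ n in atTop,
      luxNorm Φ μ ((f - g) ∘ φ^[n]) < ENNReal.ofReal (((2:ℝ)⁻¹)^j) := by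
    intro j
    by_contra hcon
    rw [Filter.not_frequently] at hcon
    have : ENNReal.ofReal (((2:ℝ)⁻¹)^j) ≤ atTop.liminf
        (fun n : ℕ => luxNorm Φ μ ((f - g) ∘ φ^[n])) := by
      refine le_liminf_of_le (by isBoundedDefault) ?_
      filter_upwards [hcon] with n hn
      exact not_lt.1 hn
    rw [hlinf] at this
    have hofpos : (0:ℝ≥0∞) < ENNReal.ofReal (((2:ℝ)⁻¹)^j) :=
      ENNReal.ofReal_pos.2 (by positivity)
    exact absurd (le_antisymm this (zero_le)) hofpos.ne'
  obtain ⟨β, hβspec⟩ := exists_seq_rec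
    (fun j (p : Fin j → ℕ) b => (∀ m : Fin j, p m < b) ∧ 1 ≤ b ∧
      luxNorm Φ μ ((f - g) ∘ φ^[b]) < ENNReal.ofReal (((2:ℝ)⁻¹)^j))
    (by
      intro j p
      set N : ℕ := (Finset.univ.sup fun m : Fin j => p m) + 1 with hN
      obtain ⟨n, hnN, hP⟩ := Filter.frequently_atTop.1 (hfreq j) N
      refine ⟨n, fun m => ?_, ?_, hP⟩
      · calc p m ≤ Finset.univ.sup (fun m : Fin j => p m) :=
            Finset.le_sup (Finset.mem_univ m)
          _ < N := by omega
          _ ≤ n := hnN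
      · omega)
  have hβmono : StrictMono β := by
    refine strictMono_nat_of_lt_succ fun j => ?_
    exact (hβspec (j+1)).1 ⟨j, by omega⟩
  have hβpos : ∀ j, 0 < β j := fun j => (hβspec j).2.1
  have hmodβ : ∀ j, ∫⁻ x, Φ (h (φ^[β j] x) / ((2:ℝ)⁻¹)^j) ∂μ ≤ 1 := by
    intro j
    have := modular_le_of_luxNorm_lt hΦ (hβspec j).2.2
    simpa [hcomp] using this
  -- pushforward measures and densities
  set ν : ℕ → Measure X := fun n => μ.map (φ^[n]) with hνdef
  have hν_apply : ∀ (n : ℕ) {A : Set X}, MeasurableSet A → ν n A = μ (φ^[n] ⁻¹' A) :=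
    fun n A hA => Measure.map_apply (hφ.iterate n) hA
  have hν_le : ∀ n : ℕ, ν n ≤ ((c^n : ℝ≥0) : ℝ≥0∞) • μ := by
    intro n
    rw [Measure.le_iff]
    intro A hA
    rw [hν_apply n hA]
    simpa using iter_bound hφ hbound n hA
  have hνac : ∀ n, ν n ≪ μ := by
    intro n
    refine Measure.AbsolutelyContinuous.mk fun A hA hA0 => ?_
    have h2 := hν_le n
    rw [Measure.le_iff] at h2
    have h1 := h2 A hA
    simp only [Measure.smul_apply, smul_eq_mul] at h1
    rw [hA0, mul_zero] at h1
    simpa using h1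
  have hνsf : ∀ n, SigmaFinite (ν n) := fun n =>
    Measure.sigmaFinite_of_le ((c^n : ℝ≥0) • μ) (hν_le n)

  -- Radon-Nikodym derivatives
  set u : ℕ → X → ℝ≥0∞ := fun n => (ν n).rnDeriv μ with hudef
  have humeas : ∀ n, Measurable (u n) := fun n => Measure.measurable_rnDeriv _ _
  have hwd : ∀ n, μ.withDensity (u n) = ν n := by
    intro n
    haveI := hνsf n
    exact Measure.withDensity_rnDeriv_eq (ν n) μ (hνac n)
  have hsetint : ∀ (n : ℕ) {A : Set X}, MeasurableSet A → ∫⁻ x in A, u n x ∂μ = ν n A := by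
    intro n A hA
    haveI := hνsf n
    exact Measure.setLIntegral_rnDeriv' (hνac n) hA
  -- the candidate sets
  set q : ℕ → ℝ := fun m => 1 / (m + 1) with hqdef
  have hq : ∀ m : ℕ, 0 < q m := fun m => by positivity
  set Eset : ℕ × ℕ × ℕ × ℕ → Set X := fun d =>
    (φ^[d.1] ⁻¹' H (q d.2.1)) ∩ {x | ((d.2.2.2 : ℕ) : ℝ≥0∞) < u d.2.2.1 x} with hEdef
  have hEmeas : ∀ d, MeasurableSet (Eset d) := fun d =>
    ((hφ.iterate d.1) (hHmeas _)).inter (measurableSet_lt measurable_const (humeas _))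
  have hEfin : ∀ d, μ (Eset d) < ⊤ := by
    intro d
    calc μ (Eset d) ≤ μ (φ^[d.1] ⁻¹' H (q d.2.1)) := measure_mono Set.inter_subset_left
      _ ≤ (c:ℝ≥0∞)^d.1 * μ (H (q d.2.1)) := iter_bound hφ hbound d.1 (hHmeas _)
      _ < ⊤ := ENNReal.mul_lt_top
          (ENNReal.pow_lt_top ENNReal.coe_lt_top) (hHfin _ (hq _))
  set F : ℕ → Set X := fun i =>
    if 0 < μ (Eset (Denumerable.ofNat (ℕ × ℕ × ℕ × ℕ) i)) then
      Eset (Denumerable.ofNat (ℕ × ℕ × ℕ × ℕ) i)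
    else H (q m₀) with hFdef
  have hFi_def : ∀ i, F i =
      if 0 < μ (Eset (Denumerable.ofNat (ℕ × ℕ × ℕ × ℕ) i)) then
        Eset (Denumerable.ofNat (ℕ × ℕ × ℕ × ℕ) i)
      else H (q m₀) := fun i => rfl
  have hFmeas : ∀ i, MeasurableSet (F i) := by
    intro i
    rw [hFi_def i]
    split
    · exact hEmeas _
    · exact hHmeas _
  have hFpos : ∀ i, 0 < μ (F i) := by
    intro i
    rw [hFi_def i]
    split
    · assumption
    · exact hm₀pos
  have hFfin : ∀ i, μ (F i) < ⊤ := by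
    intro i
    rw [hFi_def i]
    split
    · exact hEfin _
    · exact hHfin _ (hq m₀)
  -- condition (I)
  have hIkey : ∀ (m mq : ℕ) (A : Set X), A ⊆ φ^[m] ⁻¹' (H (q mq)) →
      Tendsto (fun j => youngInv Φ (1 / μ (φ^[β j] ⁻¹' A))) atTop (nhds ⊤) := by
    intro m mq A hsub
    refine tendsto_youngInv_one_div_top hΦ ?_
    have hupper : ∀ j, μ (φ^[β j] ⁻¹' A) ≤
        (c:ℝ≥0∞)^m * (1 / Φ (q mq / ((2:ℝ)⁻¹)^j)) := by
      intro j
      have hcheb : μ (φ^[β j] ⁻¹' H (q mq)) ≤ 1 / Φ (q mq / ((2:ℝ)⁻¹)^j) := by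
        have hch := chebyshev_modular hΦ (hhmeas.comp (hφ.iterate (β j)))
          (r := ((2:ℝ)⁻¹)^j) (by positivity) (hq mq) (hmodβ j)
        exact hch
      calc μ (φ^[β j] ⁻¹' A) ≤ μ (φ^[β j] ⁻¹' (φ^[m] ⁻¹' H (q mq))) :=
            measure_mono (Set.preimage_mono hsub)
        _ = μ (φ^[m] ⁻¹' (φ^[β j] ⁻¹' H (q mq))) := by
            rw [← preimage_iterate_add, add_comm, preimage_iterate_add]
        _ ≤ (c:ℝ≥0∞)^m * μ (φ^[β j] ⁻¹' H (q mq)) :=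
            iter_bound hφ hbound m ((hφ.iterate _) (hHmeas _))
        _ ≤ (c:ℝ≥0∞)^m * (1 / Φ (q mq / ((2:ℝ)⁻¹)^j)) := mul_le_mul_right hcheb _
    have hlim : Tendsto (fun j : ℕ => (c:ℝ≥0∞)^m * (1 / Φ (q mq / ((2:ℝ)⁻¹)^j)))
        atTop (nhds 0) := by
      have h1 : Tendsto (fun j : ℕ => q mq / ((2:ℝ)⁻¹)^j) atTop atTop := by
        have heq : ∀ j : ℕ, q mq / ((2:ℝ)⁻¹)^j = q mq * 2^j := by
          intro j
          field_simp
          rw [mul_assoc, ← mul_pow]; norm_num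
        simp_rw [heq]
        exact Tendsto.const_mul_atTop (hq mq)
          (tendsto_pow_atTop_atTop_of_one_lt (by norm_num))
      have h2 : Tendsto (fun j : ℕ => Φ (q mq / ((2:ℝ)⁻¹)^j)) atTop (nhds ⊤) :=
        hΦ.tendsto_atTop.comp h1
      have h3 : Tendsto (fun j : ℕ => 1 / Φ (q mq / ((2:ℝ)⁻¹)^j)) atTop (nhds 0) := by
        simp_rw [one_div]
        have h4 : Tendsto (fun j : ℕ => (Φ (q mq / ((2:ℝ)⁻¹)^j))⁻¹) atTop (nhds (⊤:ℝ≥0∞)⁻¹) :=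
          ENNReal.tendsto_inv_iff.2 h2
        simpa using h4
      have h5 : Tendsto (fun j : ℕ => (c:ℝ≥0∞)^m * (1 / Φ (q mq / ((2:ℝ)⁻¹)^j)))
          atTop (nhds ((c:ℝ≥0∞)^m * 0)) :=
        ENNReal.Tendsto.const_mul h3 (Or.inr (ENNReal.pow_ne_top ENNReal.coe_ne_top))
      simpa using h5
    exact tendsto_of_tendsto_of_tendsto_of_le_of_le tendsto_const_nhds hlim
      (fun j => zero_le) hupper
  have hI : ∀ i, Tendsto (fun j => youngInv Φ (1 / μ (φ^[β j] ⁻¹' F i))) atTop (nhds ⊤) := by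
    intro i
    rcases lt_or_ge 0 (μ (Eset (Denumerable.ofNat (ℕ × ℕ × ℕ × ℕ) i))) with hpos | hneg
    · have : F i = Eset (Denumerable.ofNat (ℕ × ℕ × ℕ × ℕ) i) := by
        rw [hFi_def i, if_pos hpos]
      rw [this]
      exact hIkey _ _ _ Set.inter_subset_left
    · have : F i = H (q m₀) := by
        rw [hFi_def i, if_neg (not_lt.2 hneg)]
      rw [this]
      refine hIkey 0 m₀ _ ?_
      rw [Function.iterate_zero]
      exact fun x hx => hx
  -- condition (II)
  have hII : (⨆ (i : ℕ) (n : ℕ),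
      youngInv Φ (1 / μ (F i)) / youngInv Φ (1 / μ (φ^[n] ⁻¹' F i))) = ⊤ := by
    by_contra hsup
    set M := ⨆ (i : ℕ) (n : ℕ),
      youngInv Φ (1 / μ (F i)) / youngInv Φ (1 / μ (φ^[n] ⁻¹' F i)) with hMdef
    have hMlt : M < ⊤ := lt_top_iff_ne_top.2 hsup
    obtain ⟨l₁, hl₁⟩ := ENNReal.exists_nat_gt hMlt.ne
    have hl : M ≤ (2:ℝ≥0∞)^l₁ := by
      refine hl₁.le.trans ?_
      have h1 : (l₁ : ℕ) ≤ 2^l₁ := (Nat.lt_two_pow_self).le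
      calc (l₁ : ℝ≥0∞) ≤ ((2^l₁ : ℕ) : ℝ≥0∞) := by exact_mod_cast h1
        _ = (2:ℝ≥0∞)^l₁ := by push_cast; ring
    obtain ⟨K, hK, hKpow⟩ := hΔ.pow
    obtain ⟨R₁, hR₁⟩ := ENNReal.exists_nat_gt
      (r := (K:ℝ≥0∞)^l₁) (ENNReal.pow_ne_top ENNReal.coe_ne_top)
    set R₂ : ℕ := R₁ + 1 with hR₂def
    have hKR : (K:ℝ≥0∞)^l₁ < (R₂:ℝ≥0∞) := by
      refine hR₁.trans_le ?_
      exact_mod_cast Nat.le_succ R₁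
    have hR₂pos : 0 < R₂ := by omega
    -- Claim A
    have hclaimA : ∀ m mq n : ℕ, μ (Eset (m, mq, n, R₂)) = 0 := by
      intro m mq n
      by_contra hA0
      have hApos : 0 < μ (Eset (m, mq, n, R₂)) := zero_lt_iff.2 hA0
      set i : ℕ := Encodable.encode (m, mq, n, R₂) with hidef
      have henc : Denumerable.ofNat (ℕ × ℕ × ℕ × ℕ) i = (m, mq, n, R₂) :=
        Denumerable.ofNat_encode _
      have hFi : F i = Eset (m, mq, n, R₂) := by
        rw [hFi_def i, henc, if_pos hApos]
      set E := Eset (m, mq, n, R₂) with hEdef2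
      have hEfin' : μ E < ⊤ := hEfin _
      have hElb : (R₂:ℝ≥0∞) * μ E ≤ ν n E := by
        rw [← hsetint n (hEmeas (m, mq, n, R₂))]
        calc (R₂:ℝ≥0∞) * μ E = ∫⁻ _ in E, (R₂:ℝ≥0∞) ∂μ := by
              rw [MeasureTheory.setLIntegral_const]
          _ ≤ ∫⁻ x in E, u n x ∂μ := by
              refine MeasureTheory.setLIntegral_mono (humeas n) fun x hx => ?_
              exact (hx.2).le
      have hbfin : ν n E < ⊤ := by
        have h2 := hν_le n
        rw [Measure.le_iff] at h2
        have h1 := h2 E (hEmeas _)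
        simp only [Measure.smul_apply, smul_eq_mul] at h1
        exact lt_of_le_of_lt h1 (ENNReal.mul_lt_top ENNReal.coe_lt_top hEfin')
      have hb0 : ν n E ≠ 0 := by
        intro h0
        rw [h0, le_zero_iff] at hElb
        rcases mul_eq_zero.1 hElb with hR | hE
        · exact absurd hR (by exact_mod_cast hR₂pos.ne')
        · exact hA0 hE
      have ha0 : μ E ≠ 0 := hA0
      have hat : μ E ≠ ⊤ := hEfin'.ne
      have h1a0 : 1 / μ E ≠ 0 := by simp [hat]
      have h1at : 1 / μ E ≠ ⊤ := by simp [ha0]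
      have h1b0 : 1 / ν n E ≠ 0 := by simp [hbfin.ne]
      have h1bt : 1 / ν n E ≠ ⊤ := by simp [hb0]
      set v := youngInv Φ (1 / μ E) with hvdef
      set w := youngInv Φ (1 / ν n E) with hwdef
      have hw0 : w ≠ 0 := (youngInv_pos hΦ (zero_lt_iff.2 h1b0)).ne'
      have hwt : w ≠ ⊤ := (youngInv_lt_top hΦ h1bt).ne
      have hratio : v / w ≤ M := by
        have heq : v / w = youngInv Φ (1 / μ (F i)) /
            youngInv Φ (1 / μ (φ^[n] ⁻¹' F i)) := by
          rw [hFi, hvdef, hwdef, hν_apply n (hEmeas (m, mq, n, R₂))]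
        rw [heq, hMdef]
        exact le_iSup_of_le i (le_iSup
          (fun n' => youngInv Φ (1 / μ (F i)) / youngInv Φ (1 / μ (φ^[n'] ⁻¹' F i))) n)
      have hvw : v ≤ (2:ℝ≥0∞)^l₁ * w := by
        have h1 := hratio.trans hl
        rwa [ENNReal.div_le_iff hw0 hwt] at h1
      have hΦw : Φ (w.toReal) = 1 / ν n E := Φ_youngInv hΦ h1bt
      have hΦv : Φ (v.toReal) = 1 / μ E := Φ_youngInv hΦ h1at
      have hvle : v.toReal ≤ (2:ℝ)^l₁ * w.toReal := by
        have h2 : ((2:ℝ≥0∞)^l₁ * w).toReal = (2:ℝ)^l₁ * w.toReal := by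
          rw [ENNReal.toReal_mul, ENNReal.toReal_pow]
          norm_num
        rw [← h2]
        exact ENNReal.toReal_mono
          (ENNReal.mul_ne_top (ENNReal.pow_ne_top (by norm_num)) hwt) hvw
      have hΦineq : Φ (v.toReal) ≤ (K:ℝ≥0∞)^l₁ * Φ (w.toReal) :=
        calc Φ (v.toReal) ≤ Φ ((2:ℝ)^l₁ * w.toReal) :=
              hΦ.mono ENNReal.toReal_nonneg hvle
          _ ≤ (K:ℝ≥0∞)^l₁ * Φ (w.toReal) := hKpow l₁ _ ENNReal.toReal_nonneg
      rw [hΦv, hΦw] at hΦineq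
      have hstep : ν n E * (1 / μ E) ≤ (K:ℝ≥0∞)^l₁ := by
        calc ν n E * (1 / μ E) ≤ ν n E * ((K:ℝ≥0∞)^l₁ * (1 / ν n E)) :=
              mul_le_mul_right hΦineq _
          _ = (K:ℝ≥0∞)^l₁ * (ν n E * (ν n E)⁻¹) := by rw [one_div]; ring
          _ = (K:ℝ≥0∞)^l₁ := by rw [ENNReal.mul_inv_cancel hb0 hbfin.ne, mul_one]
      have hdivle : ν n E / μ E ≤ (K:ℝ≥0∞)^l₁ := by
        rw [div_eq_mul_inv, ← one_div]
        exact hstep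
      have hub : ν n E ≤ (K:ℝ≥0∞)^l₁ * μ E := by
        rwa [ENNReal.div_le_iff ha0 hat] at hdivle
      have hcontr : (R₂:ℝ≥0∞) * μ E < (R₂:ℝ≥0∞) * μ E :=
        calc (R₂:ℝ≥0∞) * μ E ≤ ν n E := hElb
          _ ≤ (K:ℝ≥0∞)^l₁ * μ E := hub
          _ < (R₂:ℝ≥0∞) * μ E := by
              exact (ENNReal.mul_lt_mul_iff_left ha0 hat).2 hKR
      exact absurd hcontr (lt_irrefl _)
    -- Claim B
    have hclaimB : ∀ n m : ℕ, ∀ᵐ x ∂μ,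
        h (φ^[m] x) ≠ 0 → u n x ≤ (R₂:ℝ≥0∞) := by
      intro n m
      have hbad : μ (⋃ mq : ℕ, Eset (m, mq, n, R₂)) = 0 :=
        measure_iUnion_null fun mq => hclaimA m mq n
      filter_upwards [measure_eq_zero_iff_ae_notMem.1 hbad] with x hx hxm
      by_contra hcon
      push_neg at hcon
      refine hx ?_
      rw [Set.mem_iUnion]
      have hmem : φ^[m] x ∈ {y | h y ≠ 0} := hxm
      rw [hHunion, Set.mem_iUnion] at hmem
      obtain ⟨mq, hmq⟩ := hmem
      exact ⟨mq, ⟨hmq, hcon⟩⟩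
    -- norm bound for n ≥ β j
    have hnormub : ∀ j n : ℕ, β j ≤ n →
        luxNorm Φ μ ((f - g) ∘ φ^[n]) ≤
          (R₂:ℝ≥0∞) * ENNReal.ofReal (((2:ℝ)⁻¹)^j) := by
      intro j n hn
      set r : ℝ := ((2:ℝ)⁻¹)^j with hrdef
      have hr : 0 < r := by positivity
      set p := n - β j with hpdef
      have hnp : n = β j + p := by omega
      have hmodn : ∫⁻ x, Φ (h (φ^[n] x) / r) ∂μ ≤ (R₂:ℝ≥0∞) := by
        set G : X → ℝ≥0∞ := fun y => Φ (h (φ^[β j] y) / r) with hGdef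
        have hGmeas : Measurable G :=
          hΦ.measurable.comp ((hhmeas.comp (hφ.iterate (β j))).div_const r)
        calc ∫⁻ x, Φ (h (φ^[n] x) / r) ∂μ = ∫⁻ x, G (φ^[p] x) ∂μ := by
              refine lintegral_congr fun x => ?_
              rw [hGdef]
              dsimp only
              rw [hnp, Function.iterate_add_apply]
          _ = ∫⁻ y, G y ∂(ν p) := (lintegral_map hGmeas (hφ.iterate p)).symm
          _ = ∫⁻ y, (u p * G) y ∂μ := by
              rw [← hwd p, lintegral_withDensity_eq_lintegral_mul μ (humeas p) hGmeas]
          _ ≤ ∫⁻ y, (R₂:ℝ≥0∞) * G y ∂μ := by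
              refine lintegral_mono_ae ?_
              filter_upwards [hclaimB p (β j)] with y hy
              dsimp only [Pi.mul_apply]
              by_cases hy0 : h (φ^[β j] y) = 0
              · have : G y = 0 := by
                  rw [hGdef]; dsimp only; rw [hy0, zero_div, hΦ.map_zero]
                rw [this, mul_zero, mul_zero]
              · exact mul_le_mul_left (hy hy0) _
          _ = (R₂:ℝ≥0∞) * ∫⁻ y, G y ∂μ := lintegral_const_mul _ hGmeas
          _ ≤ (R₂:ℝ≥0∞) * 1 := mul_le_mul_right (hmodβ j) _
          _ = (R₂:ℝ≥0∞) := mul_one _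
      have hR₂r : (0:ℝ) < (R₂:ℝ) * r := by
        have : (0:ℝ) < (R₂:ℝ) := by exact_mod_cast hR₂pos
        positivity
      have hR₂R : (0:ℝ) < (R₂:ℝ) := by exact_mod_cast hR₂pos
      have hsc : ∫⁻ x, Φ (((f - g) ∘ φ^[n]) x / ((R₂:ℝ) * r)) ∂μ ≤ 1 := by
        have hptw : ∀ x, Φ (h (φ^[n] x) / ((R₂:ℝ) * r)) ≤
            ENNReal.ofReal (1/(R₂:ℝ)) * Φ (h (φ^[n] x) / r) := by
          intro x
          rw [hΦ.abs_eq (h (φ^[n] x) / ((R₂:ℝ) * r)), hΦ.abs_eq (h (φ^[n] x) / r)]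
          have harg : |h (φ^[n] x) / ((R₂:ℝ) * r)| = (1/(R₂:ℝ)) * |h (φ^[n] x) / r| := by
            rw [abs_div, abs_div, abs_of_pos hR₂r, abs_of_pos hr]
            field_simp
          rw [harg]
          exact hΦ.smul_le (by positivity)
            (by rw [div_le_one hR₂R]; exact_mod_cast hR₂pos) (abs_nonneg _)
        calc ∫⁻ x, Φ (((f - g) ∘ φ^[n]) x / ((R₂:ℝ) * r)) ∂μ
            ≤ ∫⁻ x, ENNReal.ofReal (1/(R₂:ℝ)) * Φ (h (φ^[n] x) / r) ∂μ :=
              lintegral_mono fun x => hptw x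
          _ = ENNReal.ofReal (1/(R₂:ℝ)) * ∫⁻ x, Φ (h (φ^[n] x) / r) ∂μ :=
              lintegral_const_mul' _ _ ENNReal.ofReal_ne_top
          _ ≤ ENNReal.ofReal (1/(R₂:ℝ)) * (R₂:ℝ≥0∞) := mul_le_mul_right hmodn _
          _ = 1 := by
              rw [← ENNReal.ofReal_natCast R₂, ← ENNReal.ofReal_mul (by positivity)]
              rw [one_div, inv_mul_cancel₀ hR₂R.ne', ENNReal.ofReal_one]
      refine (luxNorm_le_of_modular hR₂r hsc).trans (le_of_eq ?_)
      rw [ENNReal.ofReal_mul hR₂R.le, ENNReal.ofReal_natCast]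
    have hlimsup_le : ∀ j : ℕ, atTop.limsup (fun n : ℕ => luxNorm Φ μ ((f - g) ∘ φ^[n]))
        ≤ (R₂:ℝ≥0∞) * ENNReal.ofReal (((2:ℝ)⁻¹)^j) := by
      intro j
      refine limsup_le_of_le (by isBoundedDefault) ?_
      filter_upwards [eventually_ge_atTop (β j)] with n hn
      exact hnormub j n hn
    have htend : Tendsto (fun j : ℕ => (R₂:ℝ≥0∞) * ENNReal.ofReal (((2:ℝ)⁻¹)^j))
        atTop (nhds 0) := by
      have h1 : Tendsto (fun j : ℕ => ((2:ℝ)⁻¹)^j) atTop (nhds 0) :=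
        tendsto_pow_atTop_nhds_zero_of_lt_one (by norm_num) (by norm_num)
      have h2 : Tendsto (fun j : ℕ => ENNReal.ofReal (((2:ℝ)⁻¹)^j)) atTop (nhds 0) := by
        have := ENNReal.tendsto_ofReal (m := fun j : ℕ => ((2:ℝ)⁻¹)^j) (a := 0) h1
        simpa using this
      have h5 : Tendsto (fun j : ℕ => (R₂:ℝ≥0∞) * ENNReal.ofReal (((2:ℝ)⁻¹)^j))
          atTop (nhds ((R₂:ℝ≥0∞) * 0)) :=
        ENNReal.Tendsto.const_mul h2 (Or.inr (ENNReal.natCast_ne_top R₂))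
      simpa using h5
    have hfinal : atTop.limsup (fun n : ℕ => luxNorm Φ μ ((f - g) ∘ φ^[n])) ≤ 0 :=
      ge_of_tendsto' htend hlimsup_le
    rw [le_zero_iff] at hfinal
    rw [hfinal] at hlsup
    exact absurd hlsup (lt_irrefl 0)
  exact ⟨F, β, hβmono, hβpos, hFmeas, hFpos, hFfin, hI, hII⟩

end Necessity
section Sufficiency

theorem mul_le_one_of_le_one_div {z y : ℝ≥0∞} (hyt : y ≠ ⊤) (h : z ≤ 1 / y) :
    z * y ≤ 1 := by
  rcases eq_or_ne y 0 with hy0 | hy0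
  · rw [hy0, mul_zero]; exact zero_le_one
  · calc z * y ≤ (1 / y) * y := mul_le_mul_left h _
      _ = 1 := ENNReal.div_mul_cancel hy0 hyt

variable {X : Type*} [MeasurableSpace X]

theorem sufficiency (μ : Measure X)
    (Φ : ℝ → ℝ≥0∞) (hΦ : IsNFunction Φ)
    (φ : X → X) (hφ : Measurable φ) (c : ℝ≥0) (hc : 0 < c)
    (hbound : ∀ F : Set X, MeasurableSet F → μ (φ ⁻¹' F) ≤ (c : ℝ≥0∞) * μ F)
    (F : ℕ → Set X) (β : ℕ → ℕ) (hβmono : StrictMono β) (hβpos : ∀ j, 0 < β j)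
    (hFmeas : ∀ i, MeasurableSet (F i)) (hFpos : ∀ i, 0 < μ (F i))
    (hFfin : ∀ i, μ (F i) < ⊤)
    (hI : ∀ i, Tendsto (fun j : ℕ => youngInv Φ (1 / μ (φ^[β j] ⁻¹' F i))) atTop (nhds ⊤))
    (hII : (⨆ (i : ℕ) (n : ℕ),
      youngInv Φ (1 / μ (F i)) / youngInv Φ (1 / μ (φ^[n] ⁻¹' F i))) = ⊤) :
    CompLiYorkeChaotic Φ μ φ := by
  classical
  set v : ℕ → ℝ≥0∞ := fun i => youngInv Φ (1 / μ (F i)) with hvdef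
  set w : ℕ → ℕ → ℝ≥0∞ := fun i n => youngInv Φ (1 / μ (φ^[n] ⁻¹' F i)) with hwdef
  have hμF0 : ∀ i, μ (F i) ≠ 0 := fun i => (hFpos i).ne'
  have hμFt : ∀ i, μ (F i) ≠ ⊤ := fun i => (hFfin i).ne
  have hv0 : ∀ i, v i ≠ 0 := fun i =>
    (youngInv_pos hΦ (ENNReal.div_pos one_ne_zero (hμFt i))).ne'
  have hvt : ∀ i, v i ≠ ⊤ := fun i =>
    (youngInv_lt_top hΦ (by simp [hμF0 i])).ne
  have hμpre_t : ∀ i n, μ (φ^[n] ⁻¹' F i) ≠ ⊤ := by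
    intro i n
    have := iter_bound hφ hbound n (hFmeas i)
    exact (lt_of_le_of_lt this (ENNReal.mul_lt_top
      (ENNReal.pow_lt_top ENNReal.coe_lt_top) (hFfin i))).ne
  have hw0 : ∀ i n, w i n ≠ 0 := fun i n =>
    (youngInv_pos hΦ (ENNReal.div_pos one_ne_zero (hμpre_t i n))).ne'
  -- constants
  set c₁ : ℝ≥0 := max c 1 with hc₁def
  have hc₁1 : (1:ℝ≥0) ≤ c₁ := le_max_right _ _
  have hc₁e1 : (1:ℝ≥0∞) ≤ (c₁:ℝ≥0∞) := by exact_mod_cast hc₁1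
  have hc₁e0 : (c₁:ℝ≥0∞) ≠ 0 := by
    refine fun h0 => ?_
    rw [ENNReal.coe_eq_zero] at h0
    have := h0 ▸ hc₁1
    simp at this
  have hc₁et : (c₁:ℝ≥0∞) ≠ ⊤ := ENNReal.coe_ne_top
  have hc₁r1 : (1:ℝ) ≤ (c₁:ℝ) := by exact_mod_cast hc₁1
  have hc₁r0 : (0:ℝ) < (c₁:ℝ) := lt_of_lt_of_le one_pos hc₁r1
  have hcc₁ : (c:ℝ≥0∞) ≤ (c₁:ℝ≥0∞) := by exact_mod_cast le_max_left c 1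
  have hpow0 : ∀ n : ℕ, (c₁:ℝ≥0∞)^n ≠ 0 := fun n => pow_ne_zero n hc₁e0
  have hpowt : ∀ n : ℕ, (c₁:ℝ≥0∞)^n ≠ ⊤ := fun n => ENNReal.pow_ne_top hc₁et
  have hpow1 : ∀ n : ℕ, (1:ℝ≥0∞) ≤ (c₁:ℝ≥0∞)^n := fun n => one_le_pow_of_one_le' hc₁e1 n
  -- w is at least v / c₁^n
  have hwlb : ∀ i n, v i / (c₁:ℝ≥0∞)^n ≤ w i n := by
    intro i n
    have hm : μ (φ^[n] ⁻¹' F i) ≤ (c₁:ℝ≥0∞)^n * μ (F i) :=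
      (iter_bound hφ hbound n (hFmeas i)).trans
        (mul_le_mul_left (pow_le_pow_left' hcc₁ n) _)
    have hinv : (1 / μ (F i)) / (c₁:ℝ≥0∞)^n ≤ 1 / μ (φ^[n] ⁻¹' F i) := by
      rw [one_div, one_div, div_eq_mul_inv,
        ← ENNReal.mul_inv (Or.inl (hμF0 i)) (Or.inl (hμFt i))]
      exact ENNReal.inv_le_inv.2 (hm.trans (le_of_eq (mul_comm _ _)))
    calc v i / (c₁:ℝ≥0∞)^n ≤ youngInv Φ ((1 / μ (F i)) / (c₁:ℝ≥0∞)^n) :=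
          youngInv_div_le hΦ (hpow1 n) (hpowt n)
      _ ≤ w i n := youngInv_mono Φ hinv
  have hratio_le : ∀ i n, v i / w i n ≤ (c₁:ℝ≥0∞)^n := by
    intro i n
    calc v i / w i n ≤ v i / (v i / (c₁:ℝ≥0∞)^n) :=
          ENNReal.div_le_div_left (hwlb i n) _
      _ ≤ (c₁:ℝ≥0∞)^n := ENNReal.div_div_self_le (hv0 i) (hvt i)
          (hpow0 n) (hpowt n)
  -- extraction from (II)
  have hExII : ∀ (Q : ℝ≥0∞), Q ≠ ⊤ → ∀ m : ℕ, ∃ i n, m < n ∧ Q < v i / w i n := by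
    intro Q hQ m
    by_contra hcon
    push_neg at hcon
    have hsup_le : (⨆ (i : ℕ) (n : ℕ), v i / w i n) ≤ Q + (c₁:ℝ≥0∞)^m := by
      refine iSup_le fun i => iSup_le fun n => ?_
      rcases le_or_gt n m with hnm | hnm
      · refine le_add_left ((hratio_le i n).trans ?_)
        exact pow_le_pow_right' hc₁e1 hnm
      · exact le_add_right (hcon i n hnm)
    rw [hII] at hsup_le
    have hlt : Q + (c₁:ℝ≥0∞)^m < ⊤ := ENNReal.add_lt_top.2
      ⟨lt_top_iff_ne_top.2 hQ, lt_top_iff_ne_top.2 (hpowt m)⟩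
    exact absurd (lt_of_le_of_lt hsup_le hlt) (lt_irrefl _)
  -- real versions of v
  set tt : ℕ → ℝ := fun i => (v i).toReal with httdef
  have htt : ∀ i, 0 < tt i := fun i => ENNReal.toReal_pos (hv0 i) (hvt i)
  have hvoftt : ∀ i, v i = ENNReal.ofReal (tt i) := fun i =>
    (ENNReal.ofReal_toReal (hvt i)).symm
  -- the recursion
  set T := ℕ × ℕ × ℕ × ℝ
  set prev : ∀ (k : ℕ), (Fin k → T) → T :=
    fun k p => if h : 0 < k then p ⟨k-1, by omega⟩ else ((0,0,0,(0:ℝ)) : T) with hprevdef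
  have hprev_succ : ∀ (k : ℕ) (p : Fin (k+1) → T), prev (k+1) p = p ⟨k, by omega⟩ := by
    intro k p
    rw [hprevdef]
    exact dif_pos (by omega)
  set R : ∀ k : ℕ, (Fin k → T) → T → Prop := fun k p t =>
    (0 < k → (prev k p).2.1 < t.2.1 ∧ (prev k p).2.2.1 < t.2.2.1)
    ∧ 0 < t.2.2.2
    ∧ ENNReal.ofReal ((2:ℝ)^(2*k+2) * t.2.2.2) * (c₁:ℝ≥0∞)^(β (prev k p).2.2.1) < v t.1
    ∧ ((k:ℝ≥0∞)+1) < ENNReal.ofReal t.2.2.2 / w t.1 t.2.1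
    ∧ ∀ l : Fin (k+1), Φ ((2:ℝ)^((l:ℕ)+k+2) * |((Fin.snoc p t : Fin (k+1) → T) l).2.2.2|) *
        μ (φ^[β t.2.2.1] ⁻¹' F (((Fin.snoc p t : Fin (k+1) → T) l).1)) ≤ 1 with hRdef
  have hRex : ∀ (k : ℕ) (p : Fin k → T), ∃ t, R k p t := by
    intro k p
    set jp := (prev k p).2.2.1 with hjpdef
    set np := (prev k p).2.1 with hnpdef
    set B := β jp with hBdef
    set Y : ℝ := ((2:ℝ)⁻¹)^(2*k+3) * ((c₁:ℝ)⁻¹)^B with hYdef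
    have hY : 0 < Y := by positivity
    set τ : ℝ≥0∞ := ((k:ℝ≥0∞)+1) * ENNReal.ofReal ((2:ℝ)^(2*k+3) * (c₁:ℝ)^B) with hτdef
    have hτt : τ ≠ ⊤ := ENNReal.mul_ne_top (by simp) ENNReal.ofReal_ne_top
    obtain ⟨i, n, hn, hrat⟩ := hExII τ hτt np
    have hwn0 : w i n ≠ 0 := hw0 i n
    have hwnt : w i n ≠ ⊤ := by
      intro ht
      rw [ht, ENNReal.div_top] at hrat
      exact absurd hrat (by simp)
    set a : ℝ := tt i * Y with hadef
    have ha : 0 < a := mul_pos (htt i) hY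
    have hC2b : ENNReal.ofReal ((2:ℝ)^(2*k+2) * a) * (c₁:ℝ≥0∞)^B < v i := by
      have hcoe : (c₁:ℝ≥0∞)^B = ENNReal.ofReal ((c₁:ℝ)^B) := by
        rw [← ENNReal.ofReal_coe_nnreal, ← ENNReal.ofReal_pow c₁.coe_nonneg]
      rw [hcoe, ← ENNReal.ofReal_mul (by positivity)]
      rw [hvoftt i]
      refine ENNReal.ofReal_lt_ofReal_iff (htt i) |>.2 ?_
      have he : (2:ℝ)^(2*k+2) * a * (c₁:ℝ)^B = tt i * 2⁻¹ := by
        rw [hadef, hYdef]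
        rw [inv_pow, inv_pow]
        have h4 : (2:ℝ)^(2*k+3) = (2:ℝ)^(2*k+2) * 2 := by ring
        rw [h4]
        have hb0 : ((c₁:ℝ))^B ≠ 0 := pow_ne_zero _ hc₁r0.ne'
        have h20 : ((2:ℝ))^(2*k+2) ≠ 0 := by positivity
        field_simp
      rw [he]
      have := htt i
      linarith
    have hC2c : ((k:ℝ≥0∞)+1) < ENNReal.ofReal a / w i n := by
      have hYne : ENNReal.ofReal Y ≠ 0 := (ENNReal.ofReal_pos.2 hY).ne'
      have hYnt : ENNReal.ofReal Y ≠ ⊤ := ENNReal.ofReal_ne_top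
      have hdec : ENNReal.ofReal a / w i n = (v i / w i n) * ENNReal.ofReal Y := by
        rw [hadef, ENNReal.ofReal_mul (htt i).le, ← hvoftt i, div_eq_mul_inv, div_eq_mul_inv]
        ring
      rw [hdec]
      have hstep : τ * ENNReal.ofReal Y < (v i / w i n) * ENNReal.ofReal Y :=
        (ENNReal.mul_lt_mul_iff_left hYne hYnt).2 hrat
      refine lt_of_le_of_lt (le_of_eq ?_) hstep
      rw [hτdef, mul_assoc, ← ENNReal.ofReal_mul (by positivity)]
      have hone : (2:ℝ)^(2*k+3) * (c₁:ℝ)^B * Y = 1 := by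
        rw [hYdef, inv_pow, inv_pow]
        have hb0 : ((c₁:ℝ))^B ≠ 0 := pow_ne_zero _ hc₁r0.ne'
        have h20 : ((2:ℝ))^(2*k+3) ≠ 0 := by positivity
        field_simp
      rw [hone, ENNReal.ofReal_one, mul_one]
    set ii : Fin (k+1) → ℕ := Fin.snoc (fun l => (p l).1) i with hiidef
    set av : Fin (k+1) → ℝ := Fin.snoc (fun l => (p l).2.2.2) a with havdef
    have hev : ∀ᶠ j' in atTop, ∀ l : Fin (k+1),
        Φ ((2:ℝ)^((l:ℕ)+k+2) * |av l|) * μ (φ^[β j'] ⁻¹' F (ii l)) ≤ 1 := by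
      rw [eventually_all]
      intro l
      have hthr : ENNReal.ofReal ((2:ℝ)^((l:ℕ)+k+2) * |av l|) < ⊤ := ENNReal.ofReal_lt_top
      have hev1 : ∀ᶠ j' in atTop,
          ENNReal.ofReal ((2:ℝ)^((l:ℕ)+k+2) * |av l|) <
            youngInv Φ (1 / μ (φ^[β j'] ⁻¹' F (ii l))) :=
        (hI (ii l)).eventually (eventually_mem_set.2 (Ioi_mem_nhds hthr))
      filter_upwards [hev1] with j' hj'
      have hΦle : Φ ((2:ℝ)^((l:ℕ)+k+2) * |av l|) ≤ 1 / μ (φ^[β j'] ⁻¹' F (ii l)) :=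
        Φ_le_of_lt_youngInv hΦ (by positivity) hj'
      exact mul_le_one_of_le_one_div (hμpre_t (ii l) (β j')) hΦle
    obtain ⟨j, hj⟩ := (hev.and (eventually_gt_atTop jp)).exists
    refine ⟨(i, n, j, a), fun _ => ⟨hn, hj.2⟩, ha, hC2b, hC2c, ?_⟩
    intro l
    have h1 : ((Fin.snoc p ((i,n,j,a) : T) : Fin (k+1) → T) l).2.2.2 = av l := by
      refine Fin.lastCases ?_ (fun m => ?_) l
      · rw [Fin.snoc_last, havdef, Fin.snoc_last]
      · rw [Fin.snoc_castSucc, havdef, Fin.snoc_castSucc]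
    have h2 : ((Fin.snoc p ((i,n,j,a) : T) : Fin (k+1) → T) l).1 = ii l := by
      refine Fin.lastCases ?_ (fun m => ?_) l
      · rw [Fin.snoc_last, hiidef, Fin.snoc_last]
      · rw [Fin.snoc_castSucc, hiidef, Fin.snoc_castSucc]
    rw [h1, h2]
    exact hj.1 l
  obtain ⟨sq, hsq⟩ := exists_seq_rec R hRex
  set I : ℕ → ℕ := fun k => (sq k).1 with hIdef
  set N : ℕ → ℕ := fun k => (sq k).2.1 with hNdef
  set J : ℕ → ℕ := fun k => (sq k).2.2.1 with hJdef
  set A : ℕ → ℝ := fun k => (sq k).2.2.2 with hAdef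
  have hRsq : ∀ k, R k (fun m : Fin k => sq m) (sq k) := hsq
  have hprev_sq : ∀ k : ℕ, prev (k+1) (fun m : Fin (k+1) => sq m) = sq k := by
    intro k
    have h := hprev_succ k (fun m : Fin (k+1) => sq m)
    exact h
  have hNmono : StrictMono N := by
    refine strictMono_nat_of_lt_succ fun k => ?_
    have := (hRsq (k+1)).1 (by omega)
    rw [hprev_sq k] at this
    exact this.1
  have hJmono : StrictMono J := by
    refine strictMono_nat_of_lt_succ fun k => ?_
    have := (hRsq (k+1)).1 (by omega)
    rw [hprev_sq k] at this
    exact this.2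
  have hA0 : ∀ k, 0 < A k := fun k => (hRsq k).2.1
  have hC2c' : ∀ k : ℕ, ((k:ℝ≥0∞)+1) < ENNReal.ofReal (A k) / w (I k) (N k) :=
    fun k => (hRsq k).2.2.2.1
  set JP : ℕ → ℕ := fun k => if 0 < k then J (k-1) else 0 with hJPdef
  have hC2b' : ∀ k, ENNReal.ofReal ((2:ℝ)^(2*k+2) * A k) * (c₁:ℝ≥0∞)^(β (JP k)) < v (I k) := by
    intro k
    have := (hRsq k).2.2.1
    rcases Nat.eq_zero_or_pos k with hk | hk
    · subst hk
      have hp0 : (prev 0 (fun m : Fin 0 => sq m)).2.2.1 = JP 0 := by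
        rw [hprevdef, hJPdef]
        simp
      rwa [hp0] at this
    · obtain ⟨k', rfl⟩ := Nat.exists_eq_succ_of_ne_zero hk.ne'
      rw [hprev_sq k'] at this
      have : ENNReal.ofReal ((2:ℝ)^(2*(k'+1)+2) * A (k'+1)) * (c₁:ℝ≥0∞)^(β (J k')) <
          v (I (k'+1)) := this
      rwa [show JP (k'+1) = J k' by rw [hJPdef]; simp]
  have hsnoc_sq : ∀ (k : ℕ) (l : Fin (k+1)),
      (Fin.snoc (fun m : Fin k => sq m) (sq k) : Fin (k+1) → T) l = sq l := by
    intro k l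
    refine Fin.lastCases ?_ (fun m => ?_) l
    · simp only [Fin.snoc_last, Fin.val_last]
    · simp only [Fin.snoc_castSucc, Fin.coe_castSucc]
  have hC3 : ∀ (k l : ℕ), l ≤ k →
      Φ ((2:ℝ)^(l+k+2) * A l) * μ (φ^[β (J k)] ⁻¹' F (I l)) ≤ 1 := by
    intro k l hl
    have h0 := (hRsq k).2.2.2.2 ⟨l, by omega⟩
    rw [hsnoc_sq k ⟨l, by omega⟩] at h0
    have hval : ((⟨l, by omega⟩ : Fin (k+1)) : ℕ) = l := rfl
    rw [abs_of_pos (hA0 l)] at h0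
    exact h0
  -- tail estimate
  have hC3tail : ∀ k l : ℕ, k < l →
      Φ ((2:ℝ)^(l+k+2) * A l) * μ (φ^[β (J k)] ⁻¹' F (I l)) ≤ 1 := by
    intro k l hkl
    have hl0 : 0 < l := by omega
    have hJP : JP l = J (l-1) := by rw [hJPdef]; simp [hl0]
    have hb := hC2b' l
    rw [hJP] at hb
    have hBB : (c₁:ℝ≥0∞)^(β (J k)) ≤ (c₁:ℝ≥0∞)^(β (J (l-1))) :=
      pow_le_pow_right' hc₁e1 (hβmono.monotone (hJmono.monotone (by omega)))
    have hstep3 : ENNReal.ofReal ((2:ℝ)^(2*l+2) * A l) < v (I l) / (c₁:ℝ≥0∞)^(β (J (l-1))) := by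
      rw [ENNReal.lt_div_iff_mul_lt (Or.inl (hpow0 _)) (Or.inl (hpowt _))]
      exact hb
    have hstep4 : v (I l) / (c₁:ℝ≥0∞)^(β (J (l-1))) ≤ v (I l) / (c₁:ℝ≥0∞)^(β (J k)) :=
      ENNReal.div_le_div_left hBB _
    have hstep2 : ENNReal.ofReal ((2:ℝ)^(l+k+2) * A l) ≤ ENNReal.ofReal ((2:ℝ)^(2*l+2) * A l) := by
      refine ENNReal.ofReal_le_ofReal ?_
      refine mul_le_mul_of_nonneg_right ?_ (hA0 l).le
      exact pow_le_pow_right₀ (by norm_num) (by omega)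
    have hfin : ENNReal.ofReal ((2:ℝ)^(l+k+2) * A l) < w (I l) (β (J k)) :=
      lt_of_le_of_lt hstep2 (lt_of_lt_of_le hstep3 (hstep4.trans (hwlb (I l) (β (J k)))))
    have hΦle : Φ ((2:ℝ)^(l+k+2) * A l) ≤ 1 / μ (φ^[β (J k)] ⁻¹' F (I l)) :=
      Φ_le_of_lt_youngInv hΦ (mul_nonneg (by positivity) (hA0 l).le) hfin
    exact mul_le_one_of_le_one_div (hμpre_t (I l) (β (J k))) hΦle
  have hC3all : ∀ k l : ℕ, Φ ((2:ℝ)^(l+k+2) * A l) * μ (φ^[β (J k)] ⁻¹' F (I l)) ≤ 1 := by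
    intro k l
    rcases le_or_gt l k with hlk | hlk
    · exact hC3 k l hlk
    · exact hC3tail k l hlk
  -- membership bound at time 0
  have hAmem : ∀ l : ℕ, Φ ((2:ℝ)^(l+1) * A l) * μ (F (I l)) ≤ 1 := by
    intro l
    have hb := hC2b' l
    have h1 : ENNReal.ofReal ((2:ℝ)^(2*l+2) * A l) < v (I l) :=
      lt_of_le_of_lt (le_mul_of_one_le_right (zero_le) (hpow1 _)) hb
    have h2 : ENNReal.ofReal ((2:ℝ)^(l+1) * A l) ≤ ENNReal.ofReal ((2:ℝ)^(2*l+2) * A l) := by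
      refine ENNReal.ofReal_le_ofReal ?_
      refine mul_le_mul_of_nonneg_right ?_ (hA0 l).le
      exact pow_le_pow_right₀ (by norm_num) (by omega)
    have hΦle : Φ ((2:ℝ)^(l+1) * A l) ≤ 1 / μ (F (I l)) :=
      Φ_le_of_lt_youngInv hΦ (mul_nonneg (by positivity) (hA0 l).le) (lt_of_le_of_lt h2 h1)
    exact mul_le_one_of_le_one_div (hμFt (I l)) hΦle
  -- the function h
  set T0 : X → ℝ≥0∞ := fun x => ∑' l, (F (I l)).indicator
    (fun _ => ENNReal.ofReal (A l)) x with hT0def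
  have hT0meas : Measurable T0 :=
    Measurable.ennreal_tsum fun l => Measurable.indicator measurable_const (hFmeas _)
  set hh : X → ℝ := fun x => (T0 x).toReal with hhdef
  have hhmeas : Measurable hh := hT0meas.ennreal_toReal
  have hhnn : ∀ x, 0 ≤ hh x := fun x => ENNReal.toReal_nonneg
  -- pointwise Jensen
  have hptJ : ∀ (x : X) (r : ℝ), 0 < r → Φ (hh x / r) ≤
      ∑' l, (F (I l)).indicator
        (fun _ => ((2:ℝ≥0∞)⁻¹)^(l+1) * Φ ((2:ℝ)^(l+1) * (A l / r))) x := by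
    intro x r hr
    by_cases hTx : T0 x = ⊤
    · have h0 : hh x = 0 := by rw [hhdef]; dsimp only; rw [hTx]; rfl
      rw [h0, zero_div, hΦ.map_zero]
      exact zero_le
    · have hterm_ne : ∀ l, (F (I l)).indicator (fun _ => ENNReal.ofReal (A l)) x ≠ ⊤ := by
        intro l
        by_cases hm : x ∈ F (I l) <;> simp [Set.indicator, hm]
      have htoReal : ∀ l, ((F (I l)).indicator (fun _ => ENNReal.ofReal (A l)) x).toReal
          = (F (I l)).indicator (fun _ => A l) x := by
        intro l
        by_cases hm : x ∈ F (I l) <;>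
          simp [Set.indicator, hm, ENNReal.toReal_ofReal (hA0 l).le]
      have hhx : hh x = ∑' l, (F (I l)).indicator (fun _ => A l) x := by
        rw [hhdef]
        dsimp only
        rw [hT0def]
        dsimp only
        rw [ENNReal.tsum_toReal_eq hterm_ne]
        exact tsum_congr htoReal
      have hsumm : Summable (fun l => (F (I l)).indicator (fun _ => A l) x) := by
        have h1 := ENNReal.summable_toReal hTx
        exact (summable_congr htoReal).1 h1
      set uu : ℕ → ℝ := fun l => (F (I l)).indicator (fun _ => A l) x / r with huudef
      have huu0 : ∀ l, 0 ≤ uu l := fun l =>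
        div_nonneg (Set.indicator_nonneg (fun _ _ => (hA0 _).le) x) hr.le
      have huusum : Summable uu := hsumm.div_const r
      have hdiv : hh x / r = ∑' l, uu l := by
        rw [hhx, ← tsum_div_const]
      rw [hdiv]
      refine (hΦ.jensen_tsum huu0 huusum).trans (le_of_eq (tsum_congr fun l => ?_))
      by_cases hm : x ∈ F (I l)
      · rw [Set.indicator_of_mem hm]
        have huul : uu l = A l / r := by
          rw [huudef]; dsimp only; rw [Set.indicator_of_mem hm]
        rw [huul]
      · rw [Set.indicator_of_notMem hm]
        have huul : uu l = 0 := by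
          rw [huudef]; dsimp only; rw [Set.indicator_of_notMem hm, zero_div]
        rw [huul, mul_zero, hΦ.map_zero, mul_zero]
  -- modular bound machine
  have hmodbound : ∀ (n : ℕ) (r : ℝ), 0 < r →
      (∀ l : ℕ, Φ ((2:ℝ)^(l+1) * (A l / r)) * μ (φ^[n] ⁻¹' F (I l)) ≤ 1) →
      ∫⁻ x, Φ (hh (φ^[n] x) / r) ∂μ ≤ 1 := by
    intro n r hr hterm
    calc ∫⁻ x, Φ (hh (φ^[n] x) / r) ∂μ
        ≤ ∫⁻ x, ∑' l, (φ^[n] ⁻¹' F (I l)).indicator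
            (fun _ => ((2:ℝ≥0∞)⁻¹)^(l+1) * Φ ((2:ℝ)^(l+1) * (A l / r))) x ∂μ := by
          refine lintegral_mono fun x => ?_
          refine (hptJ (φ^[n] x) r hr).trans (le_of_eq (tsum_congr fun l => ?_))
          by_cases hm : φ^[n] x ∈ F (I l)
          · rw [Set.indicator_of_mem hm, Set.indicator_of_mem (Set.mem_preimage.2 hm)]
          · rw [Set.indicator_of_notMem hm,
              Set.indicator_of_notMem (fun hx => hm (Set.mem_preimage.1 hx))]
      _ = ∑' l, ((2:ℝ≥0∞)⁻¹)^(l+1) * Φ ((2:ℝ)^(l+1) * (A l / r)) * μ (φ^[n] ⁻¹' F (I l)) := by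
          rw [lintegral_tsum (fun l => (Measurable.indicator measurable_const
            ((hφ.iterate n) (hFmeas _))).aemeasurable)]
          refine tsum_congr fun l => ?_
          rw [lintegral_indicator_const ((hφ.iterate n) (hFmeas _))]
      _ ≤ ∑' l : ℕ, ((2:ℝ≥0∞)⁻¹)^(l+1) := by
          refine ENNReal.tsum_le_tsum fun l => ?_
          rw [mul_assoc]
          calc ((2:ℝ≥0∞)⁻¹)^(l+1) * (Φ ((2:ℝ)^(l+1) * (A l / r)) * μ (φ^[n] ⁻¹' F (I l)))
              ≤ ((2:ℝ≥0∞)⁻¹)^(l+1) * 1 := mul_le_mul_right (hterm l) _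
            _ = ((2:ℝ≥0∞)⁻¹)^(l+1) := mul_one _
      _ = 1 := tsum_half_pow
  -- modular at time 0
  have hmod0 : ∫⁻ x, Φ (hh x / 1) ∂μ ≤ 1 := by
    have ht0 : ∀ l : ℕ, Φ ((2:ℝ)^(l+1) * (A l / 1)) * μ (φ^[0] ⁻¹' F (I l)) ≤ 1 := by
      intro l
      rw [div_one, Function.iterate_zero, Set.preimage_id]
      exact hAmem l
    have := hmodbound 0 1 one_pos ht0
    simpa using this
  -- modular at the β (J k) times
  have hmodk : ∀ k : ℕ, ∫⁻ x, Φ (hh (φ^[β (J k)] x) / ((2:ℝ)⁻¹)^(k+1)) ∂μ ≤ 1 := by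
    intro k
    refine hmodbound (β (J k)) (((2:ℝ)⁻¹)^(k+1)) (by positivity) fun l => ?_
    have harg : (2:ℝ)^(l+1) * (A l / ((2:ℝ)⁻¹)^(k+1)) = (2:ℝ)^(l+k+2) * A l := by
      rw [inv_pow, div_eq_mul_inv, inv_inv]
      ring
    rw [harg]
    exact hC3all k l
  have hupperk : ∀ k : ℕ, luxNorm Φ μ (fun x => hh (φ^[β (J k)] x)) ≤
      ENNReal.ofReal (((2:ℝ)⁻¹)^(k+1)) :=
    fun k => luxNorm_le_of_modular (by positivity) (hmodk k)
  -- μ {T0 = ⊤} = 0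
  have hTtop_null : μ {x | T0 x = ⊤} = 0 := by
    set Wf : X → ℝ≥0∞ := fun x => ∑' l, (F (I l)).indicator
      (fun _ => ((2:ℝ≥0∞)⁻¹)^(l+1) * Φ ((2:ℝ)^(l+1) * A l)) x with hWfdef
    have hWmeas : Measurable Wf :=
      Measurable.ennreal_tsum fun l => Measurable.indicator measurable_const (hFmeas _)
    have hWint : ∫⁻ x, Wf x ∂μ ≤ 1 := by
      calc ∫⁻ x, Wf x ∂μ
          = ∑' l, ((2:ℝ≥0∞)⁻¹)^(l+1) * Φ ((2:ℝ)^(l+1) * A l) * μ (F (I l)) := by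
            rw [hWfdef]
            rw [lintegral_tsum (fun l => (Measurable.indicator measurable_const
              (hFmeas _)).aemeasurable)]
            refine tsum_congr fun l => ?_
            rw [lintegral_indicator_const (hFmeas _)]
        _ ≤ ∑' l : ℕ, ((2:ℝ≥0∞)⁻¹)^(l+1) := by
            refine ENNReal.tsum_le_tsum fun l => ?_
            rw [mul_assoc]
            calc ((2:ℝ≥0∞)⁻¹)^(l+1) * (Φ ((2:ℝ)^(l+1) * A l) * μ (F (I l)))
                ≤ ((2:ℝ≥0∞)⁻¹)^(l+1) * 1 := mul_le_mul_right (hAmem l) _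
              _ = ((2:ℝ≥0∞)⁻¹)^(l+1) := mul_one _
        _ = 1 := tsum_half_pow
    have hWae : ∀ᵐ x ∂μ, Wf x < ⊤ :=
      ae_lt_top hWmeas (lt_of_le_of_lt hWint ENNReal.one_lt_top).ne
    have hclaim : ∀ x, T0 x = ⊤ → Wf x = ⊤ := by
      intro x hx
      set s : ℕ → ℝ := fun m => ∑ l ∈ Finset.range m,
        (F (I l)).indicator (fun _ => A l) x with hsdef
      have hofReal_s : ∀ m, ENNReal.ofReal (s m) = ∑ l ∈ Finset.range m,
          (F (I l)).indicator (fun _ => ENNReal.ofReal (A l)) x := by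
        intro m
        rw [hsdef]
        dsimp only
        rw [ENNReal.ofReal_sum_of_nonneg
          (fun l _ => Set.indicator_nonneg (fun _ _ => (hA0 _).le) x)]
        refine Finset.sum_congr rfl fun l _ => ?_
        by_cases hm : x ∈ F (I l) <;> simp [Set.indicator, hm]
      have hsm_tendsto : Tendsto (fun m => ∑ l ∈ Finset.range m,
          (F (I l)).indicator (fun _ => ENNReal.ofReal (A l)) x) atTop (nhds (T0 x)) :=
        ENNReal.tendsto_nat_tsum _
      rw [hx] at hsm_tendsto
      have hsm_atTop : Tendsto s atTop atTop := by
        rw [tendsto_atTop]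
        intro b
        have hb : ENNReal.ofReal b < ⊤ := ENNReal.ofReal_lt_top
        have hev := hsm_tendsto.eventually (eventually_mem_set.2 (Ioi_mem_nhds hb))
        filter_upwards [hev] with m hm
        rw [← hofReal_s] at hm
        by_contra hcon
        push_neg at hcon
        exact absurd hm (not_lt.2 (ENNReal.ofReal_le_ofReal hcon.le))
      have hΦs : Tendsto (fun m => Φ (s m)) atTop (nhds ⊤) :=
        hΦ.tendsto_atTop.comp hsm_atTop
      have hbound_m : ∀ m, Φ (s m) ≤ Wf x := by
        intro m
        have harg : s m = ∑ l ∈ Finset.range m,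
            ((2:ℝ)⁻¹)^(l+1) * ((2:ℝ)^(l+1) * (F (I l)).indicator (fun _ => A l) x) := by
          rw [hsdef]
          refine Finset.sum_congr rfl fun l _ => ?_
          rw [← mul_assoc, ← mul_pow]
          norm_num
        rw [harg]
        refine (hΦ.jensen_finset (Finset.range m) _ _
          (fun l _ => by positivity) (sum_half_pow_le m)
          (fun l _ => mul_nonneg (by positivity)
            (Set.indicator_nonneg (fun _ _ => (hA0 _).le) x))).trans ?_
        have heach : ∀ l ∈ Finset.range m,
            ENNReal.ofReal (((2:ℝ)⁻¹)^(l+1)) *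
              Φ ((2:ℝ)^(l+1) * (F (I l)).indicator (fun _ => A l) x)
            = (F (I l)).indicator
                (fun _ => ((2:ℝ≥0∞)⁻¹)^(l+1) * Φ ((2:ℝ)^(l+1) * A l)) x := by
          intro l _
          by_cases hm : x ∈ F (I l)
          · rw [Set.indicator_of_mem hm, Set.indicator_of_mem hm, ofReal_half_pow]
          · rw [Set.indicator_of_notMem hm, Set.indicator_of_notMem hm,
              mul_zero, hΦ.map_zero, mul_zero]
        rw [Finset.sum_congr rfl heach]
        exact ENNReal.sum_le_tsum (Finset.range m)
      have htop : (⊤:ℝ≥0∞) ≤ Wf x := le_of_tendsto' hΦs hbound_m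
      exact top_le_iff.1 htop
    have hW0 : μ {x | ¬ Wf x < ⊤} = 0 := by
      have := hWae
      rw [MeasureTheory.ae_iff] at this
      exact this
    refine measure_mono_null (fun x hx => ?_) hW0
    have : Wf x = ⊤ := hclaim x hx
    simp [this]
  -- lower bound for the norm along N
  have hT0top_meas : MeasurableSet {x | T0 x = ⊤} := hT0meas (measurableSet_singleton ⊤)
  have hlowerN : ∀ (k : ℕ) (d : ℝ), d ≠ 0 →
      ENNReal.ofReal (|d| * A k) / w (I k) (N k) ≤
        luxNorm Φ μ (fun x => d * hh (φ^[N k] x)) := by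
    intro k d hd
    have hBadnull : μ (φ^[N k] ⁻¹' {x | T0 x = ⊤}) = 0 := by
      refine le_antisymm ?_ (zero_le)
      calc μ (φ^[N k] ⁻¹' {x | T0 x = ⊤}) ≤ (c:ℝ≥0∞)^(N k) * μ {x | T0 x = ⊤} :=
            iter_bound hφ hbound (N k) hT0top_meas
        _ = 0 := by rw [hTtop_null, mul_zero]
    refine luxNorm_ge_on_set hΦ ((hφ.iterate (N k)) (hFmeas _)) (hμpre_t (I k) (N k))
      (mul_pos (abs_pos.2 hd) (hA0 k)) ?_
    filter_upwards [measure_eq_zero_iff_ae_notMem.1 hBadnull] with x hx hxF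
    have hTne : T0 (φ^[N k] x) ≠ ⊤ := hx
    have h1 : ENNReal.ofReal (A k) ≤ T0 (φ^[N k] x) := by
      refine le_trans (le_of_eq ?_) (ENNReal.le_tsum k)
      rw [Set.indicator_of_mem (Set.mem_preimage.1 hxF)]
    have h2 : A k ≤ hh (φ^[N k] x) := by
      have h3 := ENNReal.toReal_mono hTne h1
      rwa [ENNReal.toReal_ofReal (hA0 k).le] at h3
    rw [abs_mul, abs_of_nonneg (hhnn (φ^[N k] x))]
    exact mul_le_mul_of_nonneg_left h2 (abs_nonneg d)
  have hmod0' : ∫⁻ x, Φ (hh x) ∂μ ≤ 1 := by simpa using hmod0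
  -- a point where hh is positive
  have hdiffpos : μ (F (I 0) \ {x | T0 x = ⊤}) = μ (F (I 0)) :=
    measure_diff_null hTtop_null
  have hlarge : ∀ x, x ∈ F (I 0) → T0 x ≠ ⊤ → A 0 ≤ hh x := by
    intro x hxF hxT
    have h1 : ENNReal.ofReal (A 0) ≤ T0 x := by
      refine le_trans (le_of_eq ?_) (ENNReal.le_tsum 0)
      rw [Set.indicator_of_mem hxF]
    have h2 := ENNReal.toReal_mono hxT h1
    rwa [ENNReal.toReal_ofReal (hA0 0).le] at h2
  have hneset : (F (I 0) \ {x | T0 x = ⊤}).Nonempty := by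
    refine nonempty_of_measure_ne_zero (μ := μ) ?_
    rw [hdiffpos]
    exact hμF0 (I 0)
  obtain ⟨x₀, hx₀F, hx₀T⟩ := hneset
  have hhx₀ : 0 < hh x₀ := lt_of_lt_of_le (hA0 0) (hlarge x₀ hx₀F hx₀T)
  -- the scrambled set
  set ι : ℝ → (X → ℝ) := fun t => fun x => t * hh x with hιdef
  have hιinj : Function.Injective ι := by
    intro t s hts
    have h1 := congrFun hts x₀
    exact mul_right_cancel₀ hhx₀.ne' h1
  refine ⟨ι '' Set.Ioi 0, ?_, ?_, ?_, ?_⟩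
  · -- not countable
    intro hcnt
    have h1 : (ι ⁻¹' (ι '' Set.Ioi 0)).Countable := hcnt.preimage hιinj
    have h2 : (Set.Ioi (0:ℝ)).Countable := h1.mono (Set.subset_preimage_image ι _)
    have h3 : (Set.univ : Set ℝ).Countable := by
      have h4 : (Real.exp ⁻¹' Set.Ioi 0).Countable := h2.preimage Real.exp_injective
      have h5 : Real.exp ⁻¹' Set.Ioi 0 = Set.univ := by
        ext x
        simp [Real.exp_pos]
      rwa [h5] at h4
    exact Cardinal.not_countable_real h3
  · -- membership in the Orlicz space
    rintro f ⟨t, ht, rfl⟩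
    have htpos : (0:ℝ) < t := ht
    refine ⟨hhmeas.const_mul t, 1/t, by positivity, ?_⟩
    have heq : ∀ x, Φ ((1/t) * (ι t x)) = Φ (hh x) := by
      intro x
      congr 1
      rw [hιdef]
      dsimp only
      field_simp
    calc ∫⁻ x, Φ ((1/t) * ι t x) ∂μ = ∫⁻ x, Φ (hh x) ∂μ := lintegral_congr heq
      _ ≤ 1 := hmod0'
      _ < ⊤ := ENNReal.one_lt_top
  · -- pairwise not a.e. equal
    rintro f ⟨t, _, rfl⟩ g ⟨s, _, rfl⟩ hfg hae
    have hts : t ≠ s := fun h => hfg (by rw [h])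
    have hae0 : ∀ᵐ x ∂μ, hh x = 0 := by
      filter_upwards [hae] with x hx
      have h1 : t * hh x = s * hh x := hx
      have h2 : (t - s) * hh x = 0 := by
        rw [sub_mul, h1, sub_self]
      rcases mul_eq_zero.1 h2 with h | h
      · exact absurd (sub_eq_zero.1 h) hts
      · exact h
    have hposset : μ (F (I 0) \ {x | T0 x = ⊤}) ≠ 0 := by
      rw [hdiffpos]
      exact hμF0 (I 0)
    refine hposset ?_
    have hsub : (F (I 0) \ {x | T0 x = ⊤}) ⊆ {x | ¬ hh x = 0} := by
      rintro x ⟨hxF, hxT⟩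
      have := lt_of_lt_of_le (hA0 0) (hlarge x hxF hxT)
      exact fun h0 => absurd (h0 ▸ this) (lt_irrefl 0)
    refine measure_mono_null hsub ?_
    rw [MeasureTheory.ae_iff] at hae0
    exact hae0
  · -- Li-Yorke pairs
    rintro f ⟨t, _, rfl⟩ g ⟨s, _, rfl⟩ hnae
    have hts : t ≠ s := by
      rintro rfl
      exact hnae (Filter.EventuallyEq.refl _ _)
    set d : ℝ := t - s with hddef
    have hd0 : d ≠ 0 := sub_ne_zero.2 hts
    have hfg : ∀ n : ℕ, ((ι t - ι s) ∘ φ^[n]) = fun x => d * hh (φ^[n] x) := by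
      intro n
      funext x
      show ι t (φ^[n] x) - ι s (φ^[n] x) = d * hh (φ^[n] x)
      rw [hιdef, hddef]
      dsimp only
      ring
    constructor
    · -- liminf = 0
      set m : ℕ := max 1 ⌈|d|⌉₊ with hmdef
      have hm1 : 1 ≤ m := le_max_left _ _
      have hdm : |d| ≤ m := by
        refine le_trans (Nat.le_ceil _) ?_
        exact_mod_cast le_max_right 1 ⌈|d|⌉₊
      have hub : ∀ k : ℕ, luxNorm Φ μ ((ι t - ι s) ∘ φ^[β (J k)]) ≤
          (m:ℝ≥0∞) * ENNReal.ofReal (((2:ℝ)⁻¹)^(k+1)) := by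
        intro k
        rw [hfg (β (J k))]
        refine le_trans (luxNorm_nat_smul_le hΦ hm1 hdm) ?_
        exact mul_le_mul_right (hupperk k) _
      have hliminf_le : ∀ k : ℕ,
          atTop.liminf (fun n : ℕ => luxNorm Φ μ ((ι t - ι s) ∘ φ^[n]))
          ≤ (m:ℝ≥0∞) * ENNReal.ofReal (((2:ℝ)⁻¹)^(k+1)) := by
        intro k
        refine liminf_le_of_frequently_le' ?_
        rw [Filter.frequently_atTop]
        intro m₁
        refine ⟨β (J (max k m₁)), ?_, ?_⟩
        · calc m₁ ≤ max k m₁ := le_max_right _ _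
            _ ≤ J (max k m₁) := hJmono.le_apply
            _ ≤ β (J (max k m₁)) := hβmono.le_apply
        · refine (hub (max k m₁)).trans ?_
          refine mul_le_mul_right (ENNReal.ofReal_le_ofReal ?_) _
          exact pow_le_pow_of_le_one (by norm_num) (by norm_num) (by omega)
      refine le_antisymm ?_ (zero_le)
      have htend0 : Tendsto (fun k : ℕ => (m:ℝ≥0∞) * ENNReal.ofReal (((2:ℝ)⁻¹)^(k+1)))
          atTop (nhds 0) := by
        have h1 : Tendsto (fun k : ℕ => ((2:ℝ)⁻¹)^(k+1)) atTop (nhds 0) := by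
          have h2 := (tendsto_pow_atTop_nhds_zero_of_lt_one
            (by norm_num : (0:ℝ) ≤ 2⁻¹) (by norm_num)).comp (tendsto_add_atTop_nat 1)
          exact h2
        have h2 : Tendsto (fun k : ℕ => ENNReal.ofReal (((2:ℝ)⁻¹)^(k+1))) atTop (nhds 0) := by
          have h3 := ENNReal.tendsto_ofReal (a := 0) h1
          simpa using h3
        have h4 : Tendsto (fun k : ℕ => (m:ℝ≥0∞) * ENNReal.ofReal (((2:ℝ)⁻¹)^(k+1)))
            atTop (nhds ((m:ℝ≥0∞) * 0)) :=
          ENNReal.Tendsto.const_mul h2 (Or.inr (ENNReal.natCast_ne_top m))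
        simpa using h4
      exact ge_of_tendsto' htend0 hliminf_le
    · -- limsup > 0
      have hfreq : ∃ᶠ n in atTop,
          ENNReal.ofReal |d| ≤ luxNorm Φ μ ((ι t - ι s) ∘ φ^[n]) := by
        rw [Filter.frequently_atTop]
        intro m₁
        refine ⟨N m₁, hNmono.le_apply, ?_⟩
        rw [hfg (N m₁)]
        refine le_trans ?_ (hlowerN m₁ d hd0)
        have h1 : (1:ℝ≥0∞) ≤ ENNReal.ofReal (A m₁) / w (I m₁) (N m₁) := by
          refine le_trans ?_ (hC2c' m₁).le
          exact le_add_self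
        calc ENNReal.ofReal |d| = ENNReal.ofReal |d| * 1 := (mul_one _).symm
          _ ≤ ENNReal.ofReal |d| * (ENNReal.ofReal (A m₁) / w (I m₁) (N m₁)) :=
              mul_le_mul_right h1 _
          _ = ENNReal.ofReal (|d| * A m₁) / w (I m₁) (N m₁) := by
              rw [ENNReal.ofReal_mul (abs_nonneg d), div_eq_mul_inv, div_eq_mul_inv, mul_assoc]
      have hlim := le_limsup_of_frequently_le' hfreq
      exact lt_of_lt_of_le (ENNReal.ofReal_pos.2 (abs_pos.2 hd0)) hlim

end Sufficiency
/-- Theorem 2.2: `C_φ` on `L^Φ(μ)` is Li-Yorke chaotic iff there exist a nonempty countable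
family `{F i}` of measurable sets of finite positive measure and a strictly increasing
sequence `β` of positive integers such that (I) `Φ⁻¹(1/μ(φ^{-β j}(F i))) → ∞` for every `i`,
and (II) `sup_{i,n} Φ⁻¹(1/μ(F i)) / Φ⁻¹(1/μ(φ^{-n}(F i))) = ∞`. -/
theorem compLiYorkeChaotic_iff_exists_family
    {X : Type*} [MeasurableSpace X] (μ : Measure X) [SigmaFinite μ]
    (Φ : ℝ → ℝ≥0∞) (hΦ : IsNFunction Φ) (hΔ : Delta2Global Φ)
    (φ : X → X) (hφ : Measurable φ) (c : ℝ≥0) (hc : 0 < c)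
    (hbound : ∀ F : Set X, MeasurableSet F → μ (φ ⁻¹' F) ≤ (c : ℝ≥0∞) * μ F) :
    CompLiYorkeChaotic Φ μ φ ↔
      ∃ (F : ℕ → Set X) (β : ℕ → ℕ), StrictMono β ∧ (∀ j, 0 < β j) ∧
        (∀ i, MeasurableSet (F i)) ∧ (∀ i, 0 < μ (F i)) ∧ (∀ i, μ (F i) < ⊤) ∧
        (∀ i, Tendsto (fun j : ℕ => youngInv Φ (1 / μ (φ^[β j] ⁻¹' F i))) atTop (nhds ⊤)) ∧
        (⨆ (i : ℕ) (n : ℕ),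
          youngInv Φ (1 / μ (F i)) / youngInv Φ (1 / μ (φ^[n] ⁻¹' F i))) = ⊤ := by
  constructor
  · exact necessity μ Φ hΦ hΔ φ hφ c hc hbound
  · rintro ⟨F, β, hβmono, hβpos, hFmeas, hFpos, hFfin, hI, hII⟩
    exact sufficiency μ Φ hΦ φ hφ c hc hbound F β hβmono hβpos hFmeas hFpos hFfin hI hII
end
end
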